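/- arXiv:2212.03381 — 8 statements merged into one kernel-verified Lean document; each statement's English description precedes it below -/
import Mathlib

section
/- Let P ∈ ℤ[X] be an irreducible monic quartic with Galois group C4 or D4, roots ordered so that r1 r2 + r3 r4 ∈ ℚ. Then the elements 1, r1 + r3, and r1^2 + r3^2 + r1 r3 of the splitting field are linearly independent over ℚ. -/
/-!
Let `ρ` be a Galois automorphism with `ρ² ≠ 1` (an element of order 4 in `C4` or `D4`).
Since `ρ` fixes `r₁r₂ + r₃r₄`, which differs from the other two pair sums `r₁r₃ + r₂r₄` and
`r₁r₄ + r₂r₃`, it preserves the pairing `{r₁, r₂}, {r₃, r₄}`; the only permutations doing so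
with nontrivial square are the 4-cycle `(r₁ r₃ r₂ r₄)` and its inverse. Applying that 4-cycle to
a relation `a + b (r₁ + r₃) + c (r₁² + r₃² + r₁r₃) = 0` and combining the four conjugate
relations yields `c (r₁ - r₂)(r₃ - r₄) = 0`, then `b (r₁ - r₂) = 0` and `a = 0`.
-/

open Polynomial Equiv Function

def fourCycle : Perm (Fin 4) := c[0, 2, 1, 3]

def partner : Fin 4 → Fin 4 := ![1, 0, 3, 2]

theorem eq_fourCycle_or_inv_eq_fourCycle (σ : Perm (Fin 4)) (h1 : σ 1 = partner (σ 0))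
    (h3 : σ 3 = partner (σ 2)) (hσ : σ * σ ≠ 1) : σ = fourCycle ∨ σ⁻¹ = fourCycle := by
  revert σ; decide

theorem partner_of_pairSum_eq {K : Type*} [CommRing K] [IsDomain K] {f : Fin 4 → K}
    (hf : Injective f) (σ : Perm (Fin 4))
    (h : f (σ 0) * f (σ 1) + f (σ 2) * f (σ 3) = f 0 * f 1 + f 2 * f 3) :
    σ 1 = partner (σ 0) ∧ σ 3 = partner (σ 2) := by
  have hne : ∀ {i j}, i ≠ j → f i - f j ≠ 0 := fun hij => sub_ne_zero.2 (hf.ne hij)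
  have h02 : f 0 * f 2 + f 1 * f 3 ≠ f 0 * f 1 + f 2 * f 3 := fun h' =>
    mul_ne_zero (hne (by decide : (0 : Fin 4) ≠ 3)) (hne (by decide : (2 : Fin 4) ≠ 1))
      (by linear_combination h')
  have h03 : f 0 * f 3 + f 1 * f 2 ≠ f 0 * f 1 + f 2 * f 3 := fun h' =>
    mul_ne_zero (hne (by decide : (0 : Fin 4) ≠ 2)) (hne (by decide : (3 : Fin 4) ≠ 1))
      (by linear_combination h')
  have hσ : σ 0 ≠ σ 1 ∧ σ 0 ≠ σ 2 ∧ σ 0 ≠ σ 3 ∧ σ 1 ≠ σ 2 ∧ σ 1 ≠ σ 3 ∧ σ 2 ≠ σ 3 := by simp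
  -- of the 24 orderings `(a, b, c, d)`, those not respecting `partner` make `h` contradict `h02`
  -- or `h03`
  generalize σ 0 = a, σ 1 = b, σ 2 = c, σ 3 = d at hσ h ⊢
  fin_cases a <;> fin_cases b <;> fin_cases c <;> fin_cases d <;>
    simp only [Fin.reduceFinMk, Fin.isValue, ne_eq, not_true_eq_false, false_and, and_false]
      at hσ h ⊢ <;>
    first
    | exact ⟨rfl, rfl⟩
    | exact absurd (by linear_combination h) h02
    | exact absurd (by linear_combination h) h03

theorem linearIndependent_of_fourCycle {F K : Type*} [Field F] [CommRing K] [IsDomain K]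
    [Algebra F K] (ρ : K →ₐ[F] K) {r₁ r₂ r₃ r₄ : K} (h₁₂ : r₁ ≠ r₂) (h₃₄ : r₃ ≠ r₄)
    (h₁ : ρ r₁ = r₃) (h₃ : ρ r₃ = r₂) (h₂ : ρ r₂ = r₄) (h₄ : ρ r₄ = r₁) :
    LinearIndependent F ![1, r₁ + r₃, r₁ ^ 2 + r₃ ^ 2 + r₁ * r₃] := by
  rw [Fintype.linearIndependent_iff]
  intro c hc
  let g (x y : K) : K := algebraMap F K (c 0) + algebraMap F K (c 1) * (x + y)
    + algebraMap F K (c 2) * (x ^ 2 + y ^ 2 + x * y)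
  have hg : ∀ {x y}, g x y = 0 → g (ρ x) (ρ y) = 0 := fun h => by simpa [g] using congrArg ρ h
  have g₁₃ : g r₁ r₃ = 0 := by
    simpa [g, Fin.sum_univ_three, Algebra.smul_def, add_assoc] using hc
  have g₃₂ : g r₃ r₂ = 0 := h₁ ▸ h₃ ▸ hg g₁₃
  have g₂₄ : g r₂ r₄ = 0 := h₃ ▸ h₂ ▸ hg g₃₂
  have g₄₁ : g r₄ r₁ = 0 := h₂ ▸ h₄ ▸ hg g₂₄
  have hc₂ : c 2 = 0 := by
    -- in the alternating sum of the four conjugate relations the terms of degree `≤ 1` cancel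
    have : algebraMap F K (c 2) * ((r₁ - r₂) * (r₃ - r₄)) = 0 := by
      linear_combination g₁₃ + g₂₄ - g₃₂ - g₄₁
    simpa [sub_eq_zero, h₁₂, h₃₄] using this
  have hc₁ : c 1 = 0 := by
    have : algebraMap F K (c 1) * (r₁ - r₂) = 0 := by
      linear_combination g₁₃ - g₃₂ -
        (r₁ - r₂) * (r₁ + r₂ + r₃) * (by simp [hc₂] : algebraMap F K (c 2) = 0)
    simpa [sub_eq_zero, h₁₂] using this
  have hc₀ : c 0 = 0 := by simpa [g, hc₁, hc₂] using g₁₃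
  intro i
  fin_cases i <;> assumption

theorem Function.Injective.exists_perm_apply_eq {ι K : Type*} [Finite ι] {f : ι → K}
    (hf : Injective f) {ψ : K → K} (hψ : Injective ψ) (h : ∀ i, ∃ j, ψ (f i) = f j) :
    ∃ σ : Perm ι, ∀ i, ψ (f i) = f (σ i) := by
  choose g hg using h
  have hg_inj : Injective g := fun i j hij => hf (hψ (by rw [hg, hg, hij]))
  exact ⟨Equiv.ofBijective g (Finite.injective_iff_bijective.1 hg_inj), hg⟩

namespace Polynomial

variable {F : Type*} [Field F] {Q : F[X]} {n : ℕ}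

section

variable {E : Type*} [Field E] [Algebra F E] {f : Fin n → E}

theorem Separable.injective_of_aroots_eq (hQ : Q.Separable)
    (hroots : Q.aroots E = ↑(List.ofFn f)) : Injective f :=
  List.nodup_ofFn.1 (by rw [← Multiset.coe_nodup, ← hroots]; exact nodup_roots hQ.map)

theorem mem_rootSet_iff_of_aroots_eq (hroots : Q.aroots E = ↑(List.ofFn f)) {x : E} :
    x ∈ Q.rootSet E ↔ ∃ i, f i = x := by
  rw [mem_rootSet', ← mem_aroots', hroots, Multiset.mem_coe, List.mem_ofFn]

end

theorem Gal.exists_perm_apply_eq {f : Fin n → Q.SplittingField} (hf : Injective f)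
    (hroots : Q.aroots Q.SplittingField = ↑(List.ofFn f)) (ρ : Q.Gal) :
    ∃ σ : Perm (Fin n), ∀ i, ρ (f i) = f (σ i) := by
  refine hf.exists_perm_apply_eq ρ.injective fun i => ?_
  obtain ⟨hQ0, hfi⟩ := mem_rootSet'.1 ((mem_rootSet_iff_of_aroots_eq hroots).2 ⟨i, rfl⟩)
  obtain ⟨j, hj⟩ := (mem_rootSet_iff_of_aroots_eq hroots).1 <|
    mem_rootSet'.2 ⟨hQ0, by rw [aeval_algHom_apply ρ.toAlgHom, hfi, map_zero]⟩
  exact ⟨j, hj.symm⟩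

theorem Gal.exists_apply_eq_fourCycle {f : Fin 4 → Q.SplittingField} (hf : Injective f)
    (hroots : Q.aroots Q.SplittingField = ↑(List.ofFn f))
    (hpair : ∃ q : F, f 0 * f 1 + f 2 * f 3 = algebraMap F Q.SplittingField q)
    {ρ : Q.Gal} (hρ : ρ * ρ ≠ 1) : ∃ τ : Q.Gal, ∀ i, τ (f i) = f (fourCycle i) := by
  obtain ⟨σ, hσ⟩ := exists_perm_apply_eq hf hroots ρ
  have hσσ : σ * σ ≠ 1 := fun h => hρ <| Gal.ext Q fun x hx => by
    obtain ⟨i, rfl⟩ := (mem_rootSet_iff_of_aroots_eq hroots).1 hx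
    change ρ (ρ (f i)) = f i
    rw [hσ, hσ, ← Perm.mul_apply, h, Perm.one_apply]
  have hσpair : f (σ 0) * f (σ 1) + f (σ 2) * f (σ 3) = f 0 * f 1 + f 2 * f 3 := by
    obtain ⟨q, hq⟩ := hpair
    rw [← hσ, ← hσ, ← hσ, ← hσ, ← map_mul, ← map_mul, ← map_add, hq]
    exact ρ.commutes q
  obtain ⟨h1, h3⟩ := partner_of_pairSum_eq hf σ hσpair
  rcases eq_fourCycle_or_inv_eq_fourCycle σ h1 h3 hσσ with rfl | hinv
  · exact ⟨ρ, hσ⟩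
  · refine ⟨ρ⁻¹, fun i => ?_⟩
    rw [← hinv]
    exact ρ.symm_apply_eq.2 ((hσ _).trans (congrArg f (σ.apply_symm_apply i))).symm

end Polynomial

theorem MulEquiv.exists_mul_self_ne_one {G H : Type*} [Group G] [Group H] (e : G ≃* H) {x : H}
    (hx : x * x ≠ 1) : ∃ g : G, g * g ≠ 1 :=
  ⟨e.symm x, by rwa [← map_mul, Ne, MulEquiv.map_eq_one_iff]⟩

theorem quartic_C4_D4_linear_independence_general (P : ℤ[X]) (hmonic : P.Monic)
    (hirr : Irreducible P)
    (hGal : Nonempty ((P.map (Int.castRingHom ℚ)).Gal ≃* Multiplicative (ZMod 4)) ∨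
            Nonempty ((P.map (Int.castRingHom ℚ)).Gal ≃* DihedralGroup 4))
    (r1 r2 r3 r4 : (P.map (Int.castRingHom ℚ)).SplittingField)
    (hroots : ((P.map (Int.castRingHom ℚ)).map
        (algebraMap ℚ (P.map (Int.castRingHom ℚ)).SplittingField)).roots
        = {r1, r2, r3, r4})
    (hrat : ∃ q : ℚ, r1 * r2 + r3 * r4
        = algebraMap ℚ (P.map (Int.castRingHom ℚ)).SplittingField q) :
    LinearIndependent ℚ
      ![(1 : (P.map (Int.castRingHom ℚ)).SplittingField), r1 + r3,
        r1 ^ 2 + r3 ^ 2 + r1 * r3] := by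
  have hQ : (P.map (Int.castRingHom ℚ)).Separable :=
    ((IsPrimitive.Int.irreducible_iff_irreducible_map_cast hmonic.isPrimitive).1 hirr).separable
  obtain ⟨ρ, hρ⟩ : ∃ ρ : (P.map (Int.castRingHom ℚ)).Gal, ρ * ρ ≠ 1 := by
    rcases hGal with ⟨⟨e⟩⟩ | ⟨⟨e⟩⟩
    exacts [e.exists_mul_self_ne_one (x := .ofAdd 1) (by decide),
      e.exists_mul_self_ne_one (x := .r 1) (by decide)]
  have hroots_ofFn : (P.map (Int.castRingHom ℚ)).aroots (P.map (Int.castRingHom ℚ)).SplittingField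
      = ↑(List.ofFn ![r1, r2, r3, r4]) := hroots
  have hf := hQ.injective_of_aroots_eq hroots_ofFn
  obtain ⟨τ, hτ⟩ := Gal.exists_apply_eq_fourCycle hf hroots_ofFn hrat hρ
  exact linearIndependent_of_fourCycle τ.toAlgHom (hf.ne (by decide : (0 : Fin 4) ≠ 1))
    (hf.ne (by decide : (2 : Fin 4) ≠ 3)) (hτ 0) (hτ 2) (hτ 1) (hτ 3)

/-- Let `P ∈ ℤ[X]` be an irreducible monic quartic with Galois group
`C4` or `D4`, with roots ordered so that `r1 r2 + r3 r4 ∈ ℚ`. Then `1`, `r1 + r3`,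
and `r1^2 + r3^2 + r1 r3` are linearly independent over `ℚ` in the splitting field. -/
theorem quartic_C4_D4_linear_independence (P : ℤ[X]) (hmonic : P.Monic)
    (hdeg : P.natDegree = 4) (hirr : Irreducible P)
    (hGal : Nonempty ((P.map (Int.castRingHom ℚ)).Gal ≃* Multiplicative (ZMod 4)) ∨
            Nonempty ((P.map (Int.castRingHom ℚ)).Gal ≃* DihedralGroup 4))
    (r1 r2 r3 r4 : (P.map (Int.castRingHom ℚ)).SplittingField)
    (hroots : ((P.map (Int.castRingHom ℚ)).map
        (algebraMap ℚ (P.map (Int.castRingHom ℚ)).SplittingField)).roots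
        = {r1, r2, r3, r4})
    (hrat : ∃ q : ℚ, r1 * r2 + r3 * r4
        = algebraMap ℚ (P.map (Int.castRingHom ℚ)).SplittingField q) :
    LinearIndependent ℚ
      ![(1 : (P.map (Int.castRingHom ℚ)).SplittingField), r1 + r3,
        r1 ^ 2 + r3 ^ 2 + r1 * r3] :=
  quartic_C4_D4_linear_independence_general P hmonic hirr hGal r1 r2 r3 r4 hroots hrat
end

section
/- Let P ∈ ℤ[X] be an irreducible monic quartic with Galois group C4, generated by the 4-cycle σ sending r1 → r3 → r2 → r4 → r1, with roots ordered so that r1 r2 + r3 r4 ∈ ℚ. Then ℚ(r1 + r3) equals the splitting field of P, i.e. [ℚ(r1 + r3) : ℚ] = 4. -/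
/-!
The generator `σ` permutes the four roots cyclically, so `σ ^ 4 = 1`, and since it moves `r1`
its order is exactly `4`; as `σ` generates the Galois group, `[L : ℚ] = 4`. The powers `σ`, `σ²`,
`σ³` send `r1 + r3` to `r3 + r2`, `r2 + r4`, `r4 + r1`, none of which equals `r1 + r3` because
the roots are distinct (for `σ²`, apply `σ` once more and subtract). So only the identity fixes
`r1 + r3`, and by the Galois correspondence `ℚ(r1 + r3) = L`.
-/

open Polynomial IntermediateField

theorem IntermediateField.adjoin_simple_eq_top_of_forall_apply_eq {F E : Type*} [Field F]
    [Field E] [Algebra F E] [FiniteDimensional F E] [IsGalois F E] {α : E}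
    (h : ∀ τ : E ≃ₐ[F] E, τ α = α → τ = 1) : F⟮α⟯ = ⊤ := by
  have hfix : F⟮α⟯.fixingSubgroup = ⊥ := (Subgroup.eq_bot_iff_forall _).2 fun τ hτ =>
    h τ (hτ ⟨α, mem_adjoin_simple_self F α⟩)
  rw [← IsGalois.fixedField_fixingSubgroup F⟮α⟯, hfix, fixedField_bot]

namespace AlgEquiv

variable {R A : Type*} [CommSemiring R]

section Semiring

variable [Semiring A] [Algebra R A] {σ : A ≃ₐ[R] A} {a b c d : A}

theorem pow_four_apply_of_cycle (hab : σ a = b) (hbc : σ b = c) (hcd : σ c = d)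
    (hda : σ d = a) : (σ ^ 4) a = a := by
  simp only [pow_succ, pow_zero, one_mul, mul_apply, hab, hbc, hcd, hda]

theorem pow_apply_ne_self_of_cycle (hab : σ a = b) (hbc : σ b = c) (hcd : σ c = d)
    (hab' : a ≠ b) (hac : a ≠ c) (had : a ≠ d) {m : ℕ} (hm0 : 0 < m) (hm4 : m < 4) :
    (σ ^ m) a ≠ a := by
  interval_cases m <;>
    simpa only [pow_succ, pow_zero, one_mul, mul_apply, hab, hbc, hcd] using Ne.symm ‹_›

theorem orderOf_eq_four_of_cycle (hab : σ a = b) (hbc : σ b = c) (hcd : σ c = d)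
    (h4 : σ ^ 4 = 1) (hab' : a ≠ b) (hac : a ≠ c) (had : a ≠ d) : orderOf σ = 4 :=
  (orderOf_eq_iff four_pos).2 ⟨h4, fun _ hm4 hm0 h =>
    pow_apply_ne_self_of_cycle hab hbc hcd hab' hac had hm0 hm4 (by rw [h]; rfl)⟩

end Semiring

section CommRing

variable [CommRing A] [IsAddTorsionFree A] [Algebra R A] {σ : A ≃ₐ[R] A} {a b c d : A}

theorem pow_apply_add_ne_self_of_cycle (hab : σ a = b) (hbc : σ b = c) (hcd : σ c = d)
    (hda : σ d = a) (hac : a ≠ c) (hbd : b ≠ d) {m : ℕ} (hm0 : 0 < m) (hm4 : m < 4) :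
    (σ ^ m) (a + b) ≠ a + b := by
  intro h
  interval_cases m
  · simp only [pow_one, map_add, hab, hbc] at h
    exact hac (by linear_combination -h)
  · simp only [pow_succ, pow_zero, one_mul, mul_apply, map_add, hab, hbc, hcd] at h
    have h' := congrArg σ h
    simp only [map_add, hab, hbc, hcd, hda] at h'
    refine hac ((nsmul_right_inj two_ne_zero).1 ?_)
    rw [two_nsmul, two_nsmul]
    linear_combination h' - h
  · simp only [pow_succ, pow_zero, one_mul, mul_apply, map_add, hab, hbc, hcd, hda] at h
    exact hbd (by linear_combination -h)

theorem eq_one_of_mem_zpowers_of_apply_add_eq (hab : σ a = b) (hbc : σ b = c)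
    (hcd : σ c = d) (hda : σ d = a) (hac : a ≠ c) (hbd : b ≠ d) (hord : orderOf σ = 4)
    {τ : A ≃ₐ[R] A} (hτ : τ ∈ Subgroup.zpowers σ) (hfix : τ (a + b) = a + b) : τ = 1 := by
  classical
  obtain ⟨m, hm, rfl⟩ := Finset.mem_image.1 <|
    (IsOfFinOrder.mem_zpowers_iff_mem_range_orderOf (orderOf_pos_iff.1 (hord ▸ four_pos))).1 hτ
  rw [hord, Finset.mem_range] at hm
  rcases Nat.eq_zero_or_pos m with rfl | hm0
  · exact pow_zero σ
  · exact absurd hfix (pow_apply_add_ne_self_of_cycle hab hbc hcd hda hac hbd hm0 hm)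

end CommRing

end AlgEquiv

theorem quartic_C4_adjoin_sum_roots_eq_top_general (P : ℤ[X]) (hmonic : P.Monic)
    (hirr : Irreducible P)
    (r1 r2 r3 r4 : (P.map (Int.castRingHom ℚ)).SplittingField)
    (hroots : ((P.map (Int.castRingHom ℚ)).map
        (algebraMap ℚ (P.map (Int.castRingHom ℚ)).SplittingField)).roots
        = {r1, r2, r3, r4})
    (σ : (P.map (Int.castRingHom ℚ)).Gal)
    (hgen : ∀ τ : (P.map (Int.castRingHom ℚ)).Gal, τ ∈ Subgroup.zpowers σ)
    (h13 : σ r1 = r3) (h32 : σ r3 = r2) (h24 : σ r2 = r4) (h41 : σ r4 = r1) :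
    IntermediateField.adjoin ℚ {r1 + r3} = ⊤ ∧
    Module.finrank ℚ (IntermediateField.adjoin ℚ {r1 + r3}) = 4 := by
  have hsep : (P.map (Int.castRingHom ℚ)).Separable :=
    ((IsPrimitive.Int.irreducible_iff_irreducible_map_cast hmonic.isPrimitive).1 hirr).separable
  have hnodup :=
    nodup_roots (hsep.map (f := algebraMap ℚ (P.map (Int.castRingHom ℚ)).SplittingField))
  rw [hroots] at hnodup
  simp only [Multiset.insert_eq_cons, Multiset.nodup_cons, Multiset.mem_cons,
    Multiset.mem_singleton, not_or] at hnodup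
  obtain ⟨⟨h12, h13', h14⟩, -, h34, -⟩ := hnodup
  have hσ4 : σ ^ 4 = 1 := Gal.ext _ fun x hx => by
    classical
    have : x ∈ ({r1, r2, r3, r4} : Multiset _) := by
      rw [rootSet_def, Finset.mem_coe, Multiset.mem_toFinset, aroots_def] at hx
      -- `hroots` uses the algebra `DivisionRing.toRatAlgebra`, `hx` that of `SplittingField`.
      convert hx using 1
      exact hroots.symm
    simp only [Multiset.insert_eq_cons, Multiset.mem_cons, Multiset.mem_singleton] at this
    rcases this with rfl | rfl | rfl | rfl
    · exact AlgEquiv.pow_four_apply_of_cycle h13 h32 h24 h41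
    · exact AlgEquiv.pow_four_apply_of_cycle h24 h41 h13 h32
    · exact AlgEquiv.pow_four_apply_of_cycle h32 h24 h41 h13
    · exact AlgEquiv.pow_four_apply_of_cycle h41 h13 h32 h24
  have hord : orderOf σ = 4 := AlgEquiv.orderOf_eq_four_of_cycle h13 h32 h24 hσ4 h13' h12 h14
  have : IsGalois ℚ (P.map (Int.castRingHom ℚ)).SplittingField :=
    @IsGalois.of_separable_splitting_field _ _ _ _ _ _ (IsSplittingField.splittingField _) hsep
  have htop : ℚ⟮r1 + r3⟯ = ⊤ := adjoin_simple_eq_top_of_forall_apply_eq fun τ =>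
    AlgEquiv.eq_one_of_mem_zpowers_of_apply_add_eq h13 h32 h24 h41 h12 h34 hord (hgen τ)
  refine ⟨htop, ?_⟩
  rw [htop, finrank_top', ← IsGalois.card_aut_eq_finrank]
  exact (orderOf_eq_card_of_forall_mem_zpowers hgen).symm.trans hord

/-- Let `P ∈ ℤ[X]` be an irreducible monic quartic whose Galois group
is cyclic of order 4, generated by the 4-cycle `σ` with `σ r1 = r3`, `σ r3 = r2`,
`σ r2 = r4`, `σ r4 = r1`, with roots ordered so that `r1 r2 + r3 r4 ∈ ℚ`. Then
`ℚ(r1 + r3)` equals the splitting field of `P`, i.e. `[ℚ(r1 + r3) : ℚ] = 4`. -/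
theorem quartic_C4_adjoin_sum_roots_eq_top (P : ℤ[X]) (hmonic : P.Monic)
    (hdeg : P.natDegree = 4) (hirr : Irreducible P)
    (r1 r2 r3 r4 : (P.map (Int.castRingHom ℚ)).SplittingField)
    (hroots : ((P.map (Int.castRingHom ℚ)).map
        (algebraMap ℚ (P.map (Int.castRingHom ℚ)).SplittingField)).roots
        = {r1, r2, r3, r4})
    (σ : (P.map (Int.castRingHom ℚ)).Gal)
    (hgen : ∀ τ : (P.map (Int.castRingHom ℚ)).Gal, τ ∈ Subgroup.zpowers σ)
    (h13 : σ r1 = r3) (h32 : σ r3 = r2) (h24 : σ r2 = r4) (h41 : σ r4 = r1)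
    (hrat : ∃ q : ℚ, r1 * r2 + r3 * r4
        = algebraMap ℚ (P.map (Int.castRingHom ℚ)).SplittingField q) :
    IntermediateField.adjoin ℚ {r1 + r3} = ⊤ ∧
    Module.finrank ℚ (IntermediateField.adjoin ℚ {r1 + r3}) = 4 :=
  quartic_C4_adjoin_sum_roots_eq_top_general P hmonic hirr r1 r2 r3 r4 hroots σ hgen h13 h32 h24 h41
end

section
/- Let P(X) = X^4 + c3 X^3 + c2 X^2 + c1 X + c0 ∈ ℤ[X] be monic quartic with root r1, and for α = a0 + a1 r1 + a2 r1^2 + a3 r1^3 let M_α be the matrix of multiplication by α in the basis {1, r1, r1^2, r1^3} of ℚ(r1), with cofactors B_{ij} (so that the (j,i) entry of N(α) M_α^{-1} is B_{ij}). Then the polynomial identity B_{24} B_{13} - B_{14} B_{23} = q3 · N(α) holds in ℤ[a0, a1, a2, a3], where q3 = a2^2 - a1 a3 - c3 a2 a3 + c2 a3^2 and N(α) = det M_α. -/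
open Polynomial Matrix

/-!
`B_{24} B_{13} - B_{14} B_{23}` is the `2 × 2` minor of `adj M_α` on rows `{3, 4}` and
columns `{1, 2}`. By Jacobi's complementary-minor identity it equals `N(α)`
times the minor of `M_α` on the same rows and columns, which involves only the first two
columns of `M_α`, i.e. the coordinates of `α` and `α r`. Reducing `r⁴` once gives
`α r = -c0 a3 + (a0 - c1 a3) r + (a1 - c2 a3) r² + (a2 - c3 a3) r³`, and that minor is `q3`.
-/

theorem Matrix.det_submatrix_adjugate_fin_four {R : Type*} [CommRing R]
    (M : Matrix (Fin 4) (Fin 4) R) :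
    (M.adjugate.submatrix ![2, 3] ![0, 1]).det = M.det * (M.submatrix ![2, 3] ![0, 1]).det := by
  simp only [det_fin_two, submatrix_apply, adjugate_fin_succ_eq_det_submatrix, det_fin_three,
    det_succ_row_zero (n := 3), Fin.sum_univ_four]
  simp [Fin.succAbove, Fin.lt_def]
  ring

namespace AdjoinRoot

variable {R : Type*} [CommRing R]

theorem linearIndependent_root_pow {g : R[X]} (hg : g.Monic) {n : ℕ} (hn : g.natDegree = n) :
    LinearIndependent R (fun i : Fin n => root g ^ (i : ℕ)) := by
  subst hn
  have h := (powerBasis' hg).basis.linearIndependent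
  rw [PowerBasis.coe_basis] at h
  exact h

theorem eq_of_sum_algebraMap_mul_root_pow_eq {g : R[X]} (hg : g.Monic) {n : ℕ}
    (hn : g.natDegree = n) {x y : Fin n → R}
    (h : ∑ i, algebraMap R (AdjoinRoot g) (x i) * root g ^ (i : ℕ)
      = ∑ i, algebraMap R (AdjoinRoot g) (y i) * root g ^ (i : ℕ)) :
    x = y := by
  simp only [← Algebra.smul_def] at h
  exact funext <| Fintype.linearIndependent_iffₛ.mp (linearIndependent_root_pow hg hn) x y h

theorem root_pow_four_of_quartic (c0 c1 c2 c3 : R) :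
    root (X ^ 4 + C c3 * X ^ 3 + C c2 * X ^ 2 + C c1 * X + C c0) ^ 4
      = -(algebraMap R _ c0 + algebraMap R _ c1 * root _ + algebraMap R _ c2 * root _ ^ 2
          + algebraMap R _ c3 * root _ ^ 3) := by
  have h := eval₂_root (X ^ 4 + C c3 * X ^ 3 + C c2 * X ^ 2 + C c1 * X + C c0)
  simp only [eval₂_add, eval₂_mul, eval₂_pow, eval₂_X, eval₂_C, ← algebraMap_eq] at h
  linear_combination h

end AdjoinRoot

theorem submatrix_lowerLeft_eq_of_mul_root_pow_eq {R : Type*} [CommRing R]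
    {c0 c1 c2 c3 a0 a1 a2 a3 : R} {Pq : R[X]} {M : Matrix (Fin 4) (Fin 4) R}
    (hPq : Pq = X ^ 4 + C c3 * X ^ 3 + C c2 * X ^ 2 + C c1 * X + C c0)
    (hM : ∀ j : Fin 4,
      (algebraMap R (AdjoinRoot Pq) a0
          + algebraMap R (AdjoinRoot Pq) a1 * AdjoinRoot.root Pq
          + algebraMap R (AdjoinRoot Pq) a2 * AdjoinRoot.root Pq ^ 2
          + algebraMap R (AdjoinRoot Pq) a3 * AdjoinRoot.root Pq ^ 3)
        * AdjoinRoot.root Pq ^ (j : ℕ)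
      = ∑ i : Fin 4, algebraMap R (AdjoinRoot Pq) (M i j) * AdjoinRoot.root Pq ^ (i : ℕ)) :
    M.submatrix ![2, 3] ![0, 1] = !![a2, a1 - c2 * a3; a3, a2 - c3 * a3] := by
  cases subsingleton_or_nontrivial R
  · exact Subsingleton.elim _ _
  subst hPq
  have hmon : (X ^ 4 + C c3 * X ^ 3 + C c2 * X ^ 2 + C c1 * X + C c0).Monic := by monicity!
  have hdeg : (X ^ 4 + C c3 * X ^ 3 + C c2 * X ^ 2 + C c1 * X + C c0).natDegree = 4 := by
    compute_degree!
  have col0 : (fun i => M i 0) = ![a0, a1, a2, a3] :=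
    AdjoinRoot.eq_of_sum_algebraMap_mul_root_pow_eq hmon hdeg <| (hM 0).symm.trans <| by
      simp only [Fin.sum_univ_four, Fin.coe_ofNat_eq_mod, Nat.reduceMod, cons_val, pow_zero,
        pow_one, mul_one]
  have col1 : (fun i => M i 1) = ![-c0 * a3, a0 - c1 * a3, a1 - c2 * a3, a2 - c3 * a3] :=
    AdjoinRoot.eq_of_sum_algebraMap_mul_root_pow_eq hmon hdeg <| (hM 1).symm.trans <| by
      simp only [Fin.sum_univ_four, Fin.coe_ofNat_eq_mod, Nat.reduceMod, cons_val, pow_zero,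
        pow_one, map_neg, map_sub, map_mul]
      linear_combination algebraMap R _ a3 * AdjoinRoot.root_pow_four_of_quartic c0 c1 c2 c3
  ext i j
  fin_cases i <;> fin_cases j <;> simp [congrFun col0, congrFun col1]

/-- Let `Pq = X^4 + c3 X^3 + c2 X^2 + c1 X + c0` over a commutative ring,
`r` a root of `Pq` (in `AdjoinRoot Pq`), and `M` the matrix of multiplication by
`α = a0 + a1 r + a2 r^2 + a3 r^3` in the basis `{1, r, r^2, r^3}`, with cofactors
`B_{ij}` = `(j,i)` entry of `N(α) M⁻¹`, i.e. `B_{ij} = adjugate M (j,i)`. Then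
`B_{24} B_{13} - B_{14} B_{23} = q3 ⬝ N(α)` where
`q3 = a2^2 - a1 a3 - c3 a2 a3 + c2 a3^2` and `N(α) = det M`. -/
theorem cofactor_identity_q3 (R : Type*) [CommRing R] (c0 c1 c2 c3 a0 a1 a2 a3 : R)
    (Pq : R[X]) (hPq : Pq = X ^ 4 + C c3 * X ^ 3 + C c2 * X ^ 2 + C c1 * X + C c0)
    (M : Matrix (Fin 4) (Fin 4) R)
    (hM : ∀ j : Fin 4,
      (algebraMap R (AdjoinRoot Pq) a0
          + algebraMap R (AdjoinRoot Pq) a1 * AdjoinRoot.root Pq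
          + algebraMap R (AdjoinRoot Pq) a2 * AdjoinRoot.root Pq ^ 2
          + algebraMap R (AdjoinRoot Pq) a3 * AdjoinRoot.root Pq ^ 3)
        * AdjoinRoot.root Pq ^ (j : ℕ)
      = ∑ i : Fin 4, algebraMap R (AdjoinRoot Pq) (M i j) * AdjoinRoot.root Pq ^ (i : ℕ)) :
    M.adjugate 3 1 * M.adjugate 2 0 - M.adjugate 3 0 * M.adjugate 2 1
      = (a2 ^ 2 - a1 * a3 - c3 * a2 * a3 + c2 * a3 ^ 2) * M.det := by
  have jacobi := M.det_submatrix_adjugate_fin_four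
  rw [submatrix_lowerLeft_eq_of_mul_root_pow_eq hPq hM, det_fin_two_of, det_fin_two] at jacobi
  simp only [submatrix_apply, cons_val_zero, cons_val_one] at jacobi
  linear_combination jacobi
end

section
/- Let P be a monic quartic with distinct roots and B_{13}, B_{14} the cofactor polynomials of the multiplication matrix M_α, viewed as polynomials of degree 2 in a0. Let R = Res_{a0}(B_{14}, N(α)) and R0 = Res_{a0}(B_{13}, B_{14}). Then q3^2 · R = R0^2, where q3 = a2^2 - a1 a3 - c3 a2 a3 + c2 a3^2. -/
open Polynomial Matrix

/-- The resultant of two quadratic polynomials (degree ≤ 2), as the determinant of the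
4×4 Sylvester matrix. -/
noncomputable def sylvResultant22 {R : Type*} [CommRing R] (f g : Polynomial R) : R :=
  Matrix.det !![f.coeff 2, f.coeff 1, f.coeff 0, 0;
                0, f.coeff 2, f.coeff 1, f.coeff 0;
                g.coeff 2, g.coeff 1, g.coeff 0, 0;
                0, g.coeff 2, g.coeff 1, g.coeff 0]

/-- The resultant of a quadratic polynomial `f` and a quartic polynomial `g`, as the
determinant of the 6×6 Sylvester matrix. -/
noncomputable def sylvResultant24 {R : Type*} [CommRing R] (f g : Polynomial R) : R :=
  Matrix.det !![f.coeff 2, f.coeff 1, f.coeff 0, 0, 0, 0;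
                0, f.coeff 2, f.coeff 1, f.coeff 0, 0, 0;
                0, 0, f.coeff 2, f.coeff 1, f.coeff 0, 0;
                0, 0, 0, f.coeff 2, f.coeff 1, f.coeff 0;
                g.coeff 4, g.coeff 3, g.coeff 2, g.coeff 1, g.coeff 0, 0;
                0, g.coeff 4, g.coeff 3, g.coeff 2, g.coeff 1, g.coeff 0]

/-! Modulo `B₁₄` the identities `B₂₄ B₁₃ - B₁₄ B₂₃ = q₃ N` and `B₂₄ = B₁₃ - c₃ B₁₄` give
`q₃ N ≡ B₁₃²`, so `Res(B₁₄, q₃ N) = Res(B₁₄, B₁₃²) = Res(B₁₄, B₁₃)²`, while homogeneity of the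
resultant in its second argument turns `Res(B₁₄, q₃ N)` into `q₃² Res(B₁₄, N)`.
Both cofactor identities are polynomial identities once `M_α` is identified with `α(C_P)`,
`C_P` the companion matrix of `P`. -/

section Resultant

variable {R : Type*} [CommRing R]

theorem sylvResultant24_C_mul (g N : R[X]) (q : R) :
    sylvResultant24 g (C q * N) = q ^ 2 * sylvResultant24 g N := by
  simp [sylvResultant24, det_succ_row_zero, Fin.sum_univ_succ, Fin.succAbove_of_le_castSucc,
    Fin.succAbove_of_castSucc_lt]
  ring

theorem sylvResultant24_sq_sub_mul {f g h : R[X]} (hf : f.degree ≤ 2) (hg : g.degree ≤ 2)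
    (hh : h.degree ≤ 2) : sylvResultant24 g (f ^ 2 - g * h) = sylvResultant22 f g ^ 2 := by
  have hexpand : f ^ 2 - g * h = C (f.coeff 0 ^ 2 - g.coeff 0 * h.coeff 0)
      + C (2 * f.coeff 0 * f.coeff 1 - g.coeff 0 * h.coeff 1 - g.coeff 1 * h.coeff 0) * X
      + C (f.coeff 1 ^ 2 + 2 * f.coeff 0 * f.coeff 2 - g.coeff 0 * h.coeff 2 - g.coeff 1 * h.coeff 1
          - g.coeff 2 * h.coeff 0) * X ^ 2
      + C (2 * f.coeff 1 * f.coeff 2 - g.coeff 1 * h.coeff 2 - g.coeff 2 * h.coeff 1) * X ^ 3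
      + C (f.coeff 2 ^ 2 - g.coeff 2 * h.coeff 2) * X ^ 4 := by
    conv_lhs => rw [eq_quadratic_of_degree_le_two hf, eq_quadratic_of_degree_le_two hg,
      eq_quadratic_of_degree_le_two hh]
    simp only [map_add, map_sub, map_mul, map_pow, map_ofNat]
    ring
  rw [hexpand, sylvResultant24, sylvResultant22]
  simp only [coeff_add, coeff_C_mul, coeff_C, coeff_X_pow, coeff_X]
  simp [det_succ_row_zero, Fin.sum_univ_succ, Fin.succAbove_of_le_castSucc,
    Fin.succAbove_of_castSucc_lt]
  ring

end Resultant

section MulMatrix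

variable {R : Type*} [CommRing R] (c0 c1 c2 c3 a0 a1 a2 a3 : R)

theorem Algebra.leftMulMatrix_eq_of_mul_eq {S ι : Type*} [CommRing S] [Algebra R S] [Fintype ι]
    [DecidableEq ι] (b : Module.Basis ι R S) {x : S} {M : Matrix ι ι R}
    (h : ∀ j, x * b j = ∑ i, algebraMap R S (M i j) * b i) : leftMulMatrix b x = M := by
  ext i j
  simp_rw [leftMulMatrix_eq_repr_mul, h, ← Algebra.smul_def, b.repr_sum_self]

noncomputable def quartic : R[X] :=
  X ^ 4 + C c3 * X ^ 3 + C c2 * X ^ 2 + C c1 * X + C c0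

theorem monic_quartic : (quartic c0 c1 c2 c3).Monic := by
  unfold quartic
  monicity!

theorem natDegree_quartic [Nontrivial R] :
    (quartic c0 c1 c2 c3).natDegree = 4 := by
  unfold quartic
  compute_degree!

theorem aeval_quartic {S : Type*} [CommRing S] [Algebra R S] (x : S) :
    aeval x (quartic c0 c1 c2 c3) = x ^ 4 + algebraMap R S c3 * x ^ 3
      + algebraMap R S c2 * x ^ 2 + algebraMap R S c1 * x + algebraMap R S c0 := by
  simp [quartic]

noncomputable def quarticBasis [Nontrivial R] :
    Module.Basis (Fin 4) R (AdjoinRoot (quartic c0 c1 c2 c3)) :=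
  (AdjoinRoot.powerBasis' (monic_quartic c0 c1 c2 c3)).basis.reindex
    (finCongr (natDegree_quartic c0 c1 c2 c3))

theorem quarticBasis_apply [Nontrivial R] (i : Fin 4) :
    quarticBasis c0 c1 c2 c3 i = AdjoinRoot.root _ ^ (i : ℕ) := by
  rw [quarticBasis, Module.Basis.reindex_apply, PowerBasis.basis_eq_pow]
  rfl

def companion : Matrix (Fin 4) (Fin 4) R :=
  !![0, 0, 0, -c0; 1, 0, 0, -c1; 0, 1, 0, -c2; 0, 0, 1, -c3]

theorem leftMulMatrix_root_quartic [Nontrivial R] :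
    Algebra.leftMulMatrix (quarticBasis c0 c1 c2 c3) (AdjoinRoot.root _)
      = companion c0 c1 c2 c3 := by
  have hroot := aeval_quartic c0 c1 c2 c3 (AdjoinRoot.root (quartic c0 c1 c2 c3))
  rw [AdjoinRoot.aeval_eq, AdjoinRoot.mk_self, AdjoinRoot.algebraMap_eq] at hroot
  refine Algebra.leftMulMatrix_eq_of_mul_eq _ fun j => ?_
  fin_cases j <;> simp [quarticBasis_apply, Fin.sum_univ_four, companion]
  · ring
  · ring
  · linear_combination -hroot

/-- `M_α` for `α = a0 + a1 r + a2 r² + a3 r³`, `r` a root of `X⁴ + c3 X³ + c2 X² + c1 X + c0`. -/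
def mulMatrix : Matrix (Fin 4) (Fin 4) R :=
  let L := companion c0 c1 c2 c3
  a0 • 1 + a1 • L + a2 • L ^ 2 + a3 • L ^ 3

theorem leftMulMatrix_quarticBasis [Nontrivial R] :
    let r := AdjoinRoot.root (quartic c0 c1 c2 c3)
    Algebra.leftMulMatrix (quarticBasis c0 c1 c2 c3)
      (algebraMap R _ a0 + algebraMap R _ a1 * r + algebraMap R _ a2 * r ^ 2
        + algebraMap R _ a3 * r ^ 3) = mulMatrix c0 c1 c2 c3 a0 a1 a2 a3 := by
  simp only [map_add, map_mul, map_pow, AlgHom.commutes, leftMulMatrix_root_quartic]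
  simp [mulMatrix, Algebra.algebraMap_eq_smul_one]

theorem mulMatrix_eq : mulMatrix c0 c1 c2 c3 a0 a1 a2 a3 =
    !![a0, -(a3 * c0), -(a2 * c0) + a3 * c0 * c3,
        -(a1 * c0) + a2 * c0 * c3 + a3 * c0 * (c2 - c3 ^ 2);
      a1, a0 - a3 * c1, -(a2 * c1) + a3 * (c1 * c3 - c0),
        -(a1 * c1) + a2 * (c1 * c3 - c0) + a3 * (c0 * c3 + c1 * c2 - c1 * c3 ^ 2);
      a2, a1 - a3 * c2, a0 - a2 * c2 + a3 * (c2 * c3 - c1),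
        -(a1 * c2) + a2 * (c2 * c3 - c1) + a3 * (c1 * c3 + c2 ^ 2 - c2 * c3 ^ 2 - c0);
      a3, a2 - a3 * c3, a1 - a2 * c3 + a3 * (c3 ^ 2 - c2),
        a0 - a1 * c3 + a2 * (c3 ^ 2 - c2) + a3 * (2 * c2 * c3 - c1 - c3 ^ 3)] := by
  ext i j
  fin_cases i <;> fin_cases j <;> simp [mulMatrix, companion, pow_succ] <;> ring

theorem adjugate_mulMatrix_jacobi :
    let M := mulMatrix c0 c1 c2 c3 a0 a1 a2 a3
    M.adjugate 3 1 * M.adjugate 2 0 - M.adjugate 3 0 * M.adjugate 2 1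
      = (a2 ^ 2 - a1 * a3 - c3 * a2 * a3 + c2 * a3 ^ 2) * M.det := by
  simp only [mulMatrix_eq, adjugate_fin_succ_eq_det_submatrix, det_succ_row_zero,
    Fin.sum_univ_succ]
  simp [Fin.succAbove_of_le_castSucc, Fin.succAbove_of_castSucc_lt]
  ring

theorem adjugate_mulMatrix_three_one :
    let M := mulMatrix c0 c1 c2 c3 a0 a1 a2 a3
    M.adjugate 3 1 = M.adjugate 2 0 - c3 * M.adjugate 3 0 := by
  simp only [mulMatrix_eq, adjugate_fin_succ_eq_det_submatrix, det_fin_three]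
  simp [Fin.succAbove_of_le_castSucc, Fin.succAbove_of_castSucc_lt]
  ring

theorem mul_det_mulMatrix :
    let M := mulMatrix c0 c1 c2 c3 a0 a1 a2 a3
    (a2 ^ 2 - a1 * a3 - c3 * a2 * a3 + c2 * a3 ^ 2) * M.det
      = M.adjugate 2 0 ^ 2 - M.adjugate 3 0 * (c3 * M.adjugate 2 0 + M.adjugate 2 1) := by
  intro M
  linear_combination (M.adjugate 2 0) * adjugate_mulMatrix_three_one c0 c1 c2 c3 a0 a1 a2 a3
    - adjugate_mulMatrix_jacobi c0 c1 c2 c3 a0 a1 a2 a3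

end MulMatrix

/-- An off-diagonal cofactor involves only two diagonal entries, the only entries containing `X`. -/
theorem degree_adjugate_mulMatrix_le {S : Type*} [CommRing S] (c0 c1 c2 c3 a1 a2 a3 : S)
    {i j : Fin 4} (hij : i ≠ j) :
    ((mulMatrix (C c0) (C c1) (C c2) (C c3) X (C a1) (C a2) (C a3)).adjugate i j).degree ≤ 2 := by
  rw [mulMatrix_eq, adjugate_fin_succ_eq_det_submatrix, det_fin_three]
  fin_cases i <;> fin_cases j <;> first
    | exact absurd rfl hij
    | (simp [Fin.succAbove_of_le_castSucc, Fin.succAbove_of_castSucc_lt]; compute_degree)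

theorem resultant_identity_q3_general (F : Type*) [Field F] (c0 c1 c2 c3 a1 a2 a3 : F)
    (Pq : (Polynomial F)[X])
    (hPq : Pq = X ^ 4 + C (C c3) * X ^ 3 + C (C c2) * X ^ 2 + C (C c1) * X + C (C c0))
    (M : Matrix (Fin 4) (Fin 4) (Polynomial F))
    (hM : ∀ j : Fin 4,
      (algebraMap (Polynomial F) (AdjoinRoot Pq) Polynomial.X
          + algebraMap (Polynomial F) (AdjoinRoot Pq) (C a1) * AdjoinRoot.root Pq
          + algebraMap (Polynomial F) (AdjoinRoot Pq) (C a2) * AdjoinRoot.root Pq ^ 2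
          + algebraMap (Polynomial F) (AdjoinRoot Pq) (C a3) * AdjoinRoot.root Pq ^ 3)
        * AdjoinRoot.root Pq ^ (j : ℕ)
      = ∑ i : Fin 4,
          algebraMap (Polynomial F) (AdjoinRoot Pq) (M i j) * AdjoinRoot.root Pq ^ (i : ℕ)) :
    (a2 ^ 2 - a1 * a3 - c3 * a2 * a3 + c2 * a3 ^ 2) ^ 2
        * sylvResultant24 (M.adjugate 3 0) M.det
      = (sylvResultant22 (M.adjugate 2 0) (M.adjugate 3 0)) ^ 2 := by
  obtain rfl : Pq = quartic (C c0) (C c1) (C c2) (C c3) := hPq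
  obtain rfl : M = mulMatrix (C c0) (C c1) (C c2) (C c3) X (C a1) (C a2) (C a3) := by
    rw [← leftMulMatrix_quarticBasis]
    refine (Algebra.leftMulMatrix_eq_of_mul_eq _ fun j => ?_).symm
    simpa only [quarticBasis_apply] using hM j
  have hdet := mul_det_mulMatrix (C c0) (C c1) (C c2) (C c3) X (C a1) (C a2) (C a3)
  simp only [← map_pow, ← map_mul, ← map_sub, ← map_add] at hdet
  have hdeg (i j : Fin 4) (hij : i ≠ j) := degree_adjugate_mulMatrix_le c0 c1 c2 c3 a1 a2 a3 hij
  rw [← sylvResultant24_C_mul, hdet, sylvResultant24_sq_sub_mul (hdeg 2 0 (by decide))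
    (hdeg 3 0 (by decide))]
  rw [C_mul']
  exact degree_add_le_of_degree_le ((degree_smul_le _ _).trans (hdeg 2 0 (by decide)))
    (hdeg 2 1 (by decide))

/-- Let `P = X^4 + c3 X^3 + c2 X^2 + c1 X + c0` be a monic quartic
over a field `F` with distinct roots `r1, r2, r3, r4`, and let `M` be the matrix of
multiplication by `α = a0 + a1 r + a2 r^2 + a3 r^3` in the power basis of a root `r`,
where `a0` is an indeterminate (so `M` has entries in `F[a0]`).  With the cofactors
`B13 = adjugate M (2,0)`, `B14 = adjugate M (3,0)` (quadratic in `a0`), and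
`R = Res_{a0}(B14, N(α))`, `R0 = Res_{a0}(B13, B14)`, one has `q3^2 ⬝ R = R0^2`,
where `q3 = a2^2 - a1 a3 - c3 a2 a3 + c2 a3^2`. -/
theorem resultant_identity_q3 (F : Type*) [Field F] (c0 c1 c2 c3 a1 a2 a3 : F)
    (r1 r2 r3 r4 : F)
    (hdist : r1 ≠ r2 ∧ r1 ≠ r3 ∧ r1 ≠ r4 ∧ r2 ≠ r3 ∧ r2 ≠ r4 ∧ r3 ≠ r4)
    (hfact : (X ^ 4 + C c3 * X ^ 3 + C c2 * X ^ 2 + C c1 * X + C c0 : F[X])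
        = (X - C r1) * (X - C r2) * (X - C r3) * (X - C r4))
    (Pq : (Polynomial F)[X])
    (hPq : Pq = X ^ 4 + C (C c3) * X ^ 3 + C (C c2) * X ^ 2 + C (C c1) * X + C (C c0))
    (M : Matrix (Fin 4) (Fin 4) (Polynomial F))
    (hM : ∀ j : Fin 4,
      (algebraMap (Polynomial F) (AdjoinRoot Pq) Polynomial.X
          + algebraMap (Polynomial F) (AdjoinRoot Pq) (C a1) * AdjoinRoot.root Pq
          + algebraMap (Polynomial F) (AdjoinRoot Pq) (C a2) * AdjoinRoot.root Pq ^ 2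
          + algebraMap (Polynomial F) (AdjoinRoot Pq) (C a3) * AdjoinRoot.root Pq ^ 3)
        * AdjoinRoot.root Pq ^ (j : ℕ)
      = ∑ i : Fin 4,
          algebraMap (Polynomial F) (AdjoinRoot Pq) (M i j) * AdjoinRoot.root Pq ^ (i : ℕ)) :
    (a2 ^ 2 - a1 * a3 - c3 * a2 * a3 + c2 * a3 ^ 2) ^ 2
        * sylvResultant24 (M.adjugate 3 0) M.det
      = (sylvResultant22 (M.adjugate 2 0) (M.adjugate 3 0)) ^ 2 :=
  resultant_identity_q3_general F c0 c1 c2 c3 a1 a2 a3 Pq hPq M hM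
end

section
/- Let P ∈ ℤ[X] be an irreducible monic quartic with Galois group C4 or D4 and roots r1, r2, r3, r4 ordered with r1 r2 + r3 r4 ∈ ℚ. Define q1 = ∏ over (i,j) ∈ {(1,3),(1,4),(2,3),(2,4)} of (a(r_i) - a(r_j))/(r_i - r_j) and q2 = ((a(r1)-a(r2))/(r1-r2)) · ((a(r3)-a(r4))/(r3-r4)), where a(r) = a0 + a1 r + a2 r^2 + a3 r^3. Then q1 and q2 are polynomials in a1, a2, a3 with rational coefficients (i.e. they are Galois-invariant and independent of a0). -/
/-!
Every Galois automorphism `σ` fixes `t = r1 r2 + r3 r4`. The roots being distinct, `t` differs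
from `r1 r3 + r2 r4` and `r1 r4 + r2 r3` (the differences are `(r1 - r4)(r2 - r3)` and
`(r1 - r3)(r2 - r4)`), so `σ` preserves the pairing `{{r1, r2}, {r3, r4}}` of the roots.
Each divided difference `(a(x) - a(y))/(x - y)` is the symmetric polynomial
`a1 + a2 (x + y) + a3 (x² + x y + y²)` with rational coefficients, so `q2` (a product over the
two blocks) and `q1` (a product over the pairs meeting both blocks) are fixed by the Galois
group, hence rational.
-/

open Polynomial

/-- `a(r) = a0 + a1 r + a2 r^2 + a3 r^3` with rational coefficients, evaluated in a
`ℚ`-algebra. -/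
noncomputable def cubicEvalQ {L : Type*} [Field L] [Algebra ℚ L]
    (a0 a1 a2 a3 : ℚ) (r : L) : L :=
  algebraMap ℚ L a0 + algebraMap ℚ L a1 * r + algebraMap ℚ L a2 * r ^ 2
    + algebraMap ℚ L a3 * r ^ 3

section Pairing

variable {R : Type*}

def pairing (x1 x2 x3 x4 : R) : Sym2 (Sym2 R) := s(s(x1, x2), s(x3, x4))

theorem pairing_eq_iff {x1 x2 x3 x4 y1 y2 y3 y4 : R} :
    pairing x1 x2 x3 x4 = pairing y1 y2 y3 y4 ↔
      (x1 = y1 ∧ x2 = y2 ∨ x1 = y2 ∧ x2 = y1) ∧ (x3 = y3 ∧ x4 = y4 ∨ x3 = y4 ∧ x4 = y3) ∨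
      (x1 = y3 ∧ x2 = y4 ∨ x1 = y4 ∧ x2 = y3) ∧ (x3 = y1 ∧ x4 = y2 ∨ x3 = y2 ∧ x4 = y1) := by
  simp only [pairing, Sym2.eq_iff]

section Products

variable {M : Type*} [CommMonoid M] {g : R → R → M} {x1 x2 x3 x4 y1 y2 y3 y4 : R}

theorem block_mul_eq_of_pairing_eq (hg : ∀ x y, g x y = g y x)
    (h : pairing x1 x2 x3 x4 = pairing y1 y2 y3 y4) :
    g x1 x2 * g x3 x4 = g y1 y2 * g y3 y4 := by
  rcases pairing_eq_iff.1 h with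
    ⟨⟨rfl, rfl⟩ | ⟨rfl, rfl⟩, ⟨rfl, rfl⟩ | ⟨rfl, rfl⟩⟩ |
      ⟨⟨rfl, rfl⟩ | ⟨rfl, rfl⟩, ⟨rfl, rfl⟩ | ⟨rfl, rfl⟩⟩ <;>
    simp only [hg, mul_comm]

theorem cross_mul_eq_of_pairing_eq (hg : ∀ x y, g x y = g y x)
    (h : pairing x1 x2 x3 x4 = pairing y1 y2 y3 y4) :
    g x1 x3 * g x1 x4 * g x2 x3 * g x2 x4 = g y1 y3 * g y1 y4 * g y2 y3 * g y2 y4 := by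
  rcases pairing_eq_iff.1 h with
    ⟨⟨rfl, rfl⟩ | ⟨rfl, rfl⟩, ⟨rfl, rfl⟩ | ⟨rfl, rfl⟩⟩ |
      ⟨⟨rfl, rfl⟩ | ⟨rfl, rfl⟩, ⟨rfl, rfl⟩ | ⟨rfl, rfl⟩⟩ <;>
    simp only [hg, mul_comm, mul_left_comm]

end Products

theorem pairing_map_eq_of_mul_add_mul_eq [CommRing R] [NoZeroDivisors R] {f : R → R}
    (hf : Function.Injective f) {r1 r2 r3 r4 : R}
    (hdist : r1 ≠ r2 ∧ r1 ≠ r3 ∧ r1 ≠ r4 ∧ r2 ≠ r3 ∧ r2 ≠ r4 ∧ r3 ≠ r4)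
    (hmaps : Set.MapsTo f {r1, r2, r3, r4} {r1, r2, r3, r4})
    (h : f r1 * f r2 + f r3 * f r4 = r1 * r2 + r3 * r4) :
    pairing (f r1) (f r2) (f r3) (f r4) = pairing r1 r2 r3 r4 := by
  obtain ⟨h12, h13, h14, h23, h24, h34⟩ := hdist
  have n13 : r1 * r2 + r3 * r4 ≠ r1 * r3 + r2 * r4 := fun e =>
    mul_ne_zero (sub_ne_zero.2 h14) (sub_ne_zero.2 h23) (by linear_combination e)
  have n14 : r1 * r2 + r3 * r4 ≠ r1 * r4 + r2 * r3 := fun e =>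
    mul_ne_zero (sub_ne_zero.2 h13) (sub_ne_zero.2 h24) (by linear_combination e)
  have m1 := hmaps (by simp : r1 ∈ _)
  have m2 := hmaps (by simp : r2 ∈ _)
  have m3 := hmaps (by simp : r3 ∈ _)
  have m4 := hmaps (by simp : r4 ∈ _)
  simp only [Set.mem_insert_iff, Set.mem_singleton_iff] at m1 m2 m3 m4
  -- Of the 256 assignments, non-injective ones contradict `hf`, those moving the pairing
  -- contradict `n13` or `n14`, and the remaining eight preserve the pairing.
  rcases m1 with e1 | e1 | e1 | e1 <;> rcases m2 with e2 | e2 | e2 | e2 <;>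
    rcases m3 with e3 | e3 | e3 | e3 <;> rcases m4 with e4 | e4 | e4 | e4 <;>
    rw [e1, e2, e3, e4] at h ⊢ <;>
    first
    | exact absurd (hf (e1.trans e2.symm)) h12
    | exact absurd (hf (e1.trans e3.symm)) h13
    | exact absurd (hf (e1.trans e4.symm)) h14
    | exact absurd (hf (e2.trans e3.symm)) h23
    | exact absurd (hf (e2.trans e4.symm)) h24
    | exact absurd (hf (e3.trans e4.symm)) h34
    | exact absurd (by linear_combination -h) n13
    | exact absurd (by linear_combination -h) n14
    | simp [pairing_eq_iff]

end Pairing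

section CubicSlope

variable {L : Type*} [Field L] [Algebra ℚ L]

noncomputable def cubicSlope (a1 a2 a3 : ℚ) (x y : L) : L :=
  algebraMap ℚ L a1 + algebraMap ℚ L a2 * (x + y) + algebraMap ℚ L a3 * (x ^ 2 + x * y + y ^ 2)

theorem cubicEvalQ_sub_div_sub (a0 a1 a2 a3 : ℚ) {x y : L} (h : x ≠ y) :
    (cubicEvalQ a0 a1 a2 a3 x - cubicEvalQ a0 a1 a2 a3 y) / (x - y) =
      cubicSlope a1 a2 a3 x y := by
  rw [div_eq_iff (sub_ne_zero.2 h), cubicEvalQ, cubicEvalQ, cubicSlope]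
  ring

theorem cubicSlope_comm (a1 a2 a3 : ℚ) (x y : L) :
    cubicSlope a1 a2 a3 x y = cubicSlope a1 a2 a3 y x := by
  rw [cubicSlope, cubicSlope]
  ring

theorem map_cubicSlope {L' F : Type*} [Field L'] [Algebra ℚ L'] [FunLike F L L']
    [AlgHomClass F ℚ L L'] (f : F) (a1 a2 a3 : ℚ) (x y : L) :
    f (cubicSlope a1 a2 a3 x y) = cubicSlope a1 a2 a3 (f x) (f y) := by
  simp only [cubicSlope, map_add, map_mul, map_pow, AlgHomClass.commutes]

end CubicSlope

section Galois

variable {K L : Type*} [Field K] [Field L] [Algebra K L] {p : K[X]} {r1 r2 r3 r4 : L}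

theorem mapsTo_of_roots_map_eq (hroots : (p.map (algebraMap K L)).roots = {r1, r2, r3, r4})
    (σ : L ≃ₐ[K] L) : Set.MapsTo σ {r1, r2, r3, r4} {r1, r2, r3, r4} := by
  classical
  have hset : p.rootSet L = {r1, r2, r3, r4} := by
    simp [rootSet_def, hroots]
  rw [← hset]
  exact rootSet_mapsTo σ.toAlgHom

theorem pairing_algEquiv_eq (hroots : (p.map (algebraMap K L)).roots = {r1, r2, r3, r4})
    (hdist : r1 ≠ r2 ∧ r1 ≠ r3 ∧ r1 ≠ r4 ∧ r2 ≠ r3 ∧ r2 ≠ r4 ∧ r3 ≠ r4)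
    (hrat : ∃ q : K, r1 * r2 + r3 * r4 = algebraMap K L q) (σ : L ≃ₐ[K] L) :
    pairing (σ r1) (σ r2) (σ r3) (σ r4) = pairing r1 r2 r3 r4 := by
  obtain ⟨q, hq⟩ := hrat
  refine pairing_map_eq_of_mul_add_mul_eq σ.injective hdist (mapsTo_of_roots_map_eq hroots σ) ?_
  rw [← map_mul, ← map_mul, ← map_add, hq, AlgEquiv.commutes]

end Galois

theorem quartic_C4_D4_q1_q2_rational_general (P : ℤ[X])
    (r1 r2 r3 r4 : (P.map (Int.castRingHom ℚ)).SplittingField)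
    (hroots : ((P.map (Int.castRingHom ℚ)).map
        (algebraMap ℚ (P.map (Int.castRingHom ℚ)).SplittingField)).roots
        = {r1, r2, r3, r4})
    (hdist : r1 ≠ r2 ∧ r1 ≠ r3 ∧ r1 ≠ r4 ∧ r2 ≠ r3 ∧ r2 ≠ r4 ∧ r3 ≠ r4)
    (hrat : ∃ q : ℚ, r1 * r2 + r3 * r4
        = algebraMap ℚ (P.map (Int.castRingHom ℚ)).SplittingField q) :
    ∀ a0 a1 a2 a3 : ℚ,
      ((cubicEvalQ a0 a1 a2 a3 r1 - cubicEvalQ a0 a1 a2 a3 r3) / (r1 - r3)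
          * ((cubicEvalQ a0 a1 a2 a3 r1 - cubicEvalQ a0 a1 a2 a3 r4) / (r1 - r4))
          * ((cubicEvalQ a0 a1 a2 a3 r2 - cubicEvalQ a0 a1 a2 a3 r3) / (r2 - r3))
          * ((cubicEvalQ a0 a1 a2 a3 r2 - cubicEvalQ a0 a1 a2 a3 r4) / (r2 - r4)))
        ∈ Set.range (algebraMap ℚ (P.map (Int.castRingHom ℚ)).SplittingField) ∧
      ((cubicEvalQ a0 a1 a2 a3 r1 - cubicEvalQ a0 a1 a2 a3 r2) / (r1 - r2)
          * ((cubicEvalQ a0 a1 a2 a3 r3 - cubicEvalQ a0 a1 a2 a3 r4) / (r3 - r4)))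
        ∈ Set.range (algebraMap ℚ (P.map (Int.castRingHom ℚ)).SplittingField) := by
  intro a0 a1 a2 a3
  have : IsGalois ℚ (P.map (Int.castRingHom ℚ)).SplittingField :=
    isGalois_iff.2 ⟨inferInstance, SplittingField.instNormal _⟩
  have hpairing := pairing_algEquiv_eq hroots hdist hrat
  obtain ⟨h12, h13, h14, h23, h24, h34⟩ := hdist
  rw [cubicEvalQ_sub_div_sub a0 a1 a2 a3 h13, cubicEvalQ_sub_div_sub a0 a1 a2 a3 h14,
    cubicEvalQ_sub_div_sub a0 a1 a2 a3 h23, cubicEvalQ_sub_div_sub a0 a1 a2 a3 h24,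
    cubicEvalQ_sub_div_sub a0 a1 a2 a3 h12, cubicEvalQ_sub_div_sub a0 a1 a2 a3 h34]
  simp only [IsGalois.mem_range_algebraMap_iff_fixed, map_mul, map_cubicSlope]
  exact ⟨fun σ => cross_mul_eq_of_pairing_eq (cubicSlope_comm a1 a2 a3) (hpairing σ),
    fun σ => block_mul_eq_of_pairing_eq (cubicSlope_comm a1 a2 a3) (hpairing σ)⟩

/-- Let `P ∈ ℤ[X]` be an irreducible monic quartic with Galois group
`C4` or `D4` and roots `r1, r2, r3, r4` ordered with `r1 r2 + r3 r4 ∈ ℚ`.  With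
`q1 = ∏_{(i,j) ∈ {(1,3),(1,4),(2,3),(2,4)}} (a(r_i) - a(r_j))/(r_i - r_j)` and
`q2 = ((a(r1)-a(r2))/(r1-r2)) ⬝ ((a(r3)-a(r4))/(r3-r4))`, the values `q1` and `q2`
are rational for all rational `a0, a1, a2, a3` (they are polynomials in `a1, a2, a3`
with rational coefficients). -/
theorem quartic_C4_D4_q1_q2_rational (P : ℤ[X]) (hmonic : P.Monic)
    (hdeg : P.natDegree = 4) (hirr : Irreducible P)
    (hGal : Nonempty ((P.map (Int.castRingHom ℚ)).Gal ≃* Multiplicative (ZMod 4)) ∨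
            Nonempty ((P.map (Int.castRingHom ℚ)).Gal ≃* DihedralGroup 4))
    (r1 r2 r3 r4 : (P.map (Int.castRingHom ℚ)).SplittingField)
    (hroots : ((P.map (Int.castRingHom ℚ)).map
        (algebraMap ℚ (P.map (Int.castRingHom ℚ)).SplittingField)).roots
        = {r1, r2, r3, r4})
    (hdist : r1 ≠ r2 ∧ r1 ≠ r3 ∧ r1 ≠ r4 ∧ r2 ≠ r3 ∧ r2 ≠ r4 ∧ r3 ≠ r4)
    (hrat : ∃ q : ℚ, r1 * r2 + r3 * r4
        = algebraMap ℚ (P.map (Int.castRingHom ℚ)).SplittingField q) :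
    ∀ a0 a1 a2 a3 : ℚ,
      ((cubicEvalQ a0 a1 a2 a3 r1 - cubicEvalQ a0 a1 a2 a3 r3) / (r1 - r3)
          * ((cubicEvalQ a0 a1 a2 a3 r1 - cubicEvalQ a0 a1 a2 a3 r4) / (r1 - r4))
          * ((cubicEvalQ a0 a1 a2 a3 r2 - cubicEvalQ a0 a1 a2 a3 r3) / (r2 - r3))
          * ((cubicEvalQ a0 a1 a2 a3 r2 - cubicEvalQ a0 a1 a2 a3 r4) / (r2 - r4)))
        ∈ Set.range (algebraMap ℚ (P.map (Int.castRingHom ℚ)).SplittingField) ∧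
      ((cubicEvalQ a0 a1 a2 a3 r1 - cubicEvalQ a0 a1 a2 a3 r2) / (r1 - r2)
          * ((cubicEvalQ a0 a1 a2 a3 r3 - cubicEvalQ a0 a1 a2 a3 r4) / (r3 - r4)))
        ∈ Set.range (algebraMap ℚ (P.map (Int.castRingHom ℚ)).SplittingField) :=
  quartic_C4_D4_q1_q2_rational_general P r1 r2 r3 r4 hroots hdist hrat
end

section
/- Let P ∈ ℤ[X] be an irreducible monic quartic with Galois group C4, generated by σ = (r1 r3 r2 r4), roots ordered with r1 r2 + r3 r4 ∈ ℚ, and set K = ℚ(r1 + r3). Then the quartic form q1(a1,a2,a3) = ∏_{(i,j)∈{(1,3),(1,4),(2,3),(2,4)}} (a1 + a2(r_i+r_j) + a3(r_i^2+r_i r_j+r_j^2)) equals N_{K/ℚ}(a1 + a2(r1+r3) + a3(r1^2 + r1 r3 + r3^2)) for all a1, a2, a3 ∈ ℚ. -/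
/-!
The generator `σ` moves `r1 + r3` along `r2 + r3`, `r2 + r4`, `r1 + r4`, all different from
`r1 + r3` because the roots are distinct; so `r1 + r3` has trivial stabilizer in the Galois group
and generates the whole splitting field. The norm over a cyclic Galois extension is the product of
the `σ ^ i`-conjugates, and the conjugates of `a1 + a2 (r1 + r3) + a3 (r1² + r1 r3 + r3²)` are
exactly the four factors of `q1`.
-/

open Polynomial

namespace IntermediateField

theorem adjoin_simple_eq_top_of_forall_apply_eq_self {F E : Type*} [Field F] [Field E]
    [Algebra F E] [IsGalois F E] [FiniteDimensional F E] {x : E}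
    (h : ∀ τ : E ≃ₐ[F] E, τ x = x → τ = 1) : F⟮x⟯ = ⊤ := by
  have hfix : F⟮x⟯.fixingSubgroup = ⊥ := (Subgroup.eq_bot_iff_forall _).2 fun τ hτ =>
    h τ (hτ ⟨x, mem_adjoin_simple_self F x⟩)
  rw [← IsGalois.fixedField_fixingSubgroup F⟮x⟯, hfix, fixedField_bot]

end IntermediateField

theorem Finset.prod_univ_eq_prod_range_orderOf {G M : Type*} [Group G] [Fintype G]
    [CommMonoid M] {σ : G} (hgen : ∀ τ : G, τ ∈ Subgroup.zpowers σ) (f : G → M) :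
    ∏ τ, f τ = ∏ i ∈ range (orderOf σ), f (σ ^ i) := by
  classical
  have himage : (range (orderOf σ)).image (σ ^ ·) = univ :=
    eq_univ_of_forall fun τ => mem_zpowers_iff_mem_range_orderOf.1 (hgen τ)
  rw [← himage, prod_image]
  simpa only [coe_range] using pow_injOn_Iio_orderOf.mono subset_rfl

theorem Algebra.algebraMap_norm_eq_prod_range_orderOf {K L : Type*} [Field K] [Field L]
    [Algebra K L] [IsGalois K L] [FiniteDimensional K L] {σ : L ≃ₐ[K] L}
    (hgen : ∀ τ : L ≃ₐ[K] L, τ ∈ Subgroup.zpowers σ) (x : L) :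
    algebraMap K L (norm K x) = ∏ i ∈ Finset.range (orderOf σ), (σ ^ i) x := by
  rw [norm_eq_prod_automorphisms, Finset.prod_univ_eq_prod_range_orderOf hgen]

section FourCycle

variable {F L : Type*} [Field F] [Field L] [Algebra F L] {σ : L ≃ₐ[F] L} {r1 r2 r3 r4 : L}

theorem pow_four_apply_of_apply_cycle (h13 : σ r1 = r3) (h32 : σ r3 = r2) (h24 : σ r2 = r4)
    (h41 : σ r4 = r1) {x : L} (hx : x = r1 ∨ x = r2 ∨ x = r3 ∨ x = r4) : (σ ^ 4) x = x := by
  rcases hx with rfl | rfl | rfl | rfl <;>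
    simp only [pow_succ, pow_zero, one_mul, AlgEquiv.mul_apply, h13, h32, h24, h41]

theorem orderOf_eq_four_of_apply_cycle (hσ4 : σ ^ 4 = 1) (h13 : σ r1 = r3) (h32 : σ r3 = r2)
    (h12 : r1 ≠ r2) : orderOf σ = 4 :=
  orderOf_eq_prime_pow (p := 2) (n := 1)
    (fun h => h12 (by simpa [pow_succ, h13, h32] using (DFunLike.congr_fun h r1).symm)) hσ4

theorem eq_zero_of_pow_apply_add_eq_self [NeZero (2 : L)] (h13 : σ r1 = r3) (h32 : σ r3 = r2)
    (h24 : σ r2 = r4) (h41 : σ r4 = r1) (h12 : r1 ≠ r2) (h34 : r3 ≠ r4) {k : ℕ} (hk : k < 4)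
    (hfix : (σ ^ k) (r1 + r3) = r1 + r3) : k = 0 := by
  interval_cases k
  · rfl
  · simp only [pow_one, map_add, h13, h32] at hfix
    exact absurd (by linear_combination -hfix) h12
  · simp only [pow_succ, pow_zero, one_mul, AlgEquiv.mul_apply, map_add, h13, h32, h24] at hfix
    have hfix' := congrArg σ hfix
    simp only [map_add, h13, h32, h24, h41] at hfix'
    exact absurd (mul_left_cancel₀ two_ne_zero (by linear_combination -(hfix + hfix'))) h34
  · simp only [pow_succ, pow_zero, one_mul, AlgEquiv.mul_apply, map_add, h13, h32, h24, h41]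
      at hfix
    exact absurd (by linear_combination -hfix) h34

variable [IsGalois F L] [FiniteDimensional F L]

theorem adjoin_add_eq_top_of_apply_cycle [NeZero (2 : L)]
    (hgen : ∀ τ : L ≃ₐ[F] L, τ ∈ Subgroup.zpowers σ) (horder : orderOf σ = 4)
    (h13 : σ r1 = r3) (h32 : σ r3 = r2) (h24 : σ r2 = r4) (h41 : σ r4 = r1)
    (h12 : r1 ≠ r2) (h34 : r3 ≠ r4) : IntermediateField.adjoin F {r1 + r3} = ⊤ := by
  classical
  refine IntermediateField.adjoin_simple_eq_top_of_forall_apply_eq_self fun τ hτ => ?_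
  obtain ⟨k, hk, rfl⟩ := Finset.mem_image.1 (mem_zpowers_iff_mem_range_orderOf.1 (hgen τ))
  rw [horder, Finset.mem_range] at hk
  rw [eq_zero_of_pow_apply_add_eq_self h13 h32 h24 h41 h12 h34 hk hτ, pow_zero]

theorem prod_eq_algebraMap_norm_of_apply_cycle
    (hgen : ∀ τ : L ≃ₐ[F] L, τ ∈ Subgroup.zpowers σ) (horder : orderOf σ = 4)
    (h13 : σ r1 = r3) (h32 : σ r3 = r2) (h24 : σ r2 = r4) (h41 : σ r4 = r1) (a1 a2 a3 : F) :
    (algebraMap F L a1 + algebraMap F L a2 * (r1 + r3)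
          + algebraMap F L a3 * (r1 ^ 2 + r1 * r3 + r3 ^ 2))
        * (algebraMap F L a1 + algebraMap F L a2 * (r1 + r4)
          + algebraMap F L a3 * (r1 ^ 2 + r1 * r4 + r4 ^ 2))
        * (algebraMap F L a1 + algebraMap F L a2 * (r2 + r3)
          + algebraMap F L a3 * (r2 ^ 2 + r2 * r3 + r3 ^ 2))
        * (algebraMap F L a1 + algebraMap F L a2 * (r2 + r4)
          + algebraMap F L a3 * (r2 ^ 2 + r2 * r4 + r4 ^ 2))
      = algebraMap F L (Algebra.norm F (algebraMap F L a1 + algebraMap F L a2 * (r1 + r3)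
          + algebraMap F L a3 * (r1 ^ 2 + r1 * r3 + r3 ^ 2))) := by
  rw [Algebra.algebraMap_norm_eq_prod_range_orderOf hgen, horder]
  simp only [Finset.prod_range_succ, Finset.prod_range_zero, pow_succ, pow_zero, one_mul,
    AlgEquiv.one_apply, AlgEquiv.mul_apply, map_add, map_mul, AlgEquiv.commutes,
    h13, h32, h24, h41]
  ring

end FourCycle

theorem quartic_C4_q1_is_norm_general (P : ℤ[X]) (hmonic : P.Monic)
    (hirr : Irreducible P)
    (r1 r2 r3 r4 : (P.map (Int.castRingHom ℚ)).SplittingField)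
    (hroots : ((P.map (Int.castRingHom ℚ)).map
        (algebraMap ℚ (P.map (Int.castRingHom ℚ)).SplittingField)).roots
        = {r1, r2, r3, r4})
    (σ : (P.map (Int.castRingHom ℚ)).Gal)
    (hgen : ∀ τ : (P.map (Int.castRingHom ℚ)).Gal, τ ∈ Subgroup.zpowers σ)
    (h13 : σ r1 = r3) (h32 : σ r3 = r2) (h24 : σ r2 = r4) (h41 : σ r4 = r1) :
    IntermediateField.adjoin ℚ {r1 + r3} = ⊤ ∧
    ∀ a1 a2 a3 : ℚ,
      (algebraMap ℚ _ a1 + algebraMap ℚ _ a2 * (r1 + r3)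
          + algebraMap ℚ _ a3 * (r1 ^ 2 + r1 * r3 + r3 ^ 2))
        * (algebraMap ℚ _ a1 + algebraMap ℚ _ a2 * (r1 + r4)
          + algebraMap ℚ _ a3 * (r1 ^ 2 + r1 * r4 + r4 ^ 2))
        * (algebraMap ℚ _ a1 + algebraMap ℚ _ a2 * (r2 + r3)
          + algebraMap ℚ _ a3 * (r2 ^ 2 + r2 * r3 + r3 ^ 2))
        * (algebraMap ℚ _ a1 + algebraMap ℚ _ a2 * (r2 + r4)
          + algebraMap ℚ _ a3 * (r2 ^ 2 + r2 * r4 + r4 ^ 2))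
      = algebraMap ℚ (P.map (Int.castRingHom ℚ)).SplittingField
          (Algebra.norm ℚ
            (algebraMap ℚ (P.map (Int.castRingHom ℚ)).SplittingField a1
              + algebraMap ℚ _ a2 * (r1 + r3)
              + algebraMap ℚ _ a3 * (r1 ^ 2 + r1 * r3 + r3 ^ 2))) := by
  classical
  have hsep : (P.map (Int.castRingHom ℚ)).Separable :=
    ((IsPrimitive.Int.irreducible_iff_irreducible_map_cast hmonic.isPrimitive).1 hirr).separable
  -- Instance search finds the `ℚ`-algebra `DivisionRing.toRatAlgebra` on the splitting field, which
  -- is not reducibly defeq to the one `Polynomial.Gal` is built on.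
  have : IsSplittingField ℚ (P.map (Int.castRingHom ℚ)).SplittingField
      (P.map (Int.castRingHom ℚ)) := IsSplittingField.splittingField _
  have : IsGalois ℚ (P.map (Int.castRingHom ℚ)).SplittingField :=
    IsGalois.of_separable_splitting_field hsep
  have hnodup := nodup_roots
    (hsep.map (f := algebraMap ℚ (P.map (Int.castRingHom ℚ)).SplittingField))
  simp only [hroots, Multiset.insert_eq_cons, Multiset.nodup_cons, Multiset.mem_cons,
    Multiset.mem_singleton, not_or] at hnodup
  obtain ⟨⟨h12, -, -⟩, ⟨-, -⟩, h34, -⟩ := hnodup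
  have hσ4 : σ ^ 4 = 1 := Gal.ext _ fun x hx => by
    rw [rootSet_def, aroots_def, Finset.mem_coe, Multiset.mem_toFinset] at hx
    have hx' : x ∈ ({r1, r2, r3, r4} : Multiset _) := by rw [← hroots]; exact hx
    simp only [Multiset.insert_eq_cons, Multiset.mem_cons, Multiset.mem_singleton] at hx'
    exact pow_four_apply_of_apply_cycle h13 h32 h24 h41 hx'
  have horder := orderOf_eq_four_of_apply_cycle hσ4 h13 h32 h12
  exact ⟨adjoin_add_eq_top_of_apply_cycle hgen horder h13 h32 h24 h41 h12 h34,
    prod_eq_algebraMap_norm_of_apply_cycle hgen horder h13 h32 h24 h41⟩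

/-- Let `P ∈ ℤ[X]` be an irreducible monic quartic with cyclic Galois
group `C4` generated by `σ = (r1 r3 r2 r4)`, roots ordered with `r1 r2 + r3 r4 ∈ ℚ`.
Then `K := ℚ(r1 + r3)` is the whole splitting field, and the quartic form
`q1(a1,a2,a3) = ∏_{(i,j)∈{(1,3),(1,4),(2,3),(2,4)}} (a1 + a2(r_i+r_j) + a3(r_i^2+r_i r_j+r_j^2))`
equals `N_{K/ℚ}(a1 + a2(r1+r3) + a3(r1^2 + r1 r3 + r3^2))` for all `a1, a2, a3 ∈ ℚ`. -/
theorem quartic_C4_q1_is_norm (P : ℤ[X]) (hmonic : P.Monic)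
    (hdeg : P.natDegree = 4) (hirr : Irreducible P)
    (r1 r2 r3 r4 : (P.map (Int.castRingHom ℚ)).SplittingField)
    (hroots : ((P.map (Int.castRingHom ℚ)).map
        (algebraMap ℚ (P.map (Int.castRingHom ℚ)).SplittingField)).roots
        = {r1, r2, r3, r4})
    (σ : (P.map (Int.castRingHom ℚ)).Gal)
    (hgen : ∀ τ : (P.map (Int.castRingHom ℚ)).Gal, τ ∈ Subgroup.zpowers σ)
    (h13 : σ r1 = r3) (h32 : σ r3 = r2) (h24 : σ r2 = r4) (h41 : σ r4 = r1)
    (hrat : ∃ q : ℚ, r1 * r2 + r3 * r4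
        = algebraMap ℚ (P.map (Int.castRingHom ℚ)).SplittingField q) :
    IntermediateField.adjoin ℚ {r1 + r3} = ⊤ ∧
    ∀ a1 a2 a3 : ℚ,
      (algebraMap ℚ _ a1 + algebraMap ℚ _ a2 * (r1 + r3)
          + algebraMap ℚ _ a3 * (r1 ^ 2 + r1 * r3 + r3 ^ 2))
        * (algebraMap ℚ _ a1 + algebraMap ℚ _ a2 * (r1 + r4)
          + algebraMap ℚ _ a3 * (r1 ^ 2 + r1 * r4 + r4 ^ 2))
        * (algebraMap ℚ _ a1 + algebraMap ℚ _ a2 * (r2 + r3)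
          + algebraMap ℚ _ a3 * (r2 ^ 2 + r2 * r3 + r3 ^ 2))
        * (algebraMap ℚ _ a1 + algebraMap ℚ _ a2 * (r2 + r4)
          + algebraMap ℚ _ a3 * (r2 ^ 2 + r2 * r4 + r4 ^ 2))
      = algebraMap ℚ (P.map (Int.castRingHom ℚ)).SplittingField
          (Algebra.norm ℚ
            (algebraMap ℚ (P.map (Int.castRingHom ℚ)).SplittingField a1
              + algebraMap ℚ _ a2 * (r1 + r3)
              + algebraMap ℚ _ a3 * (r1 ^ 2 + r1 * r3 + r3 ^ 2))) :=
  quartic_C4_q1_is_norm_general P hmonic hirr r1 r2 r3 r4 hroots σ hgen h13 h32 h24 h41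
end

section
/- Let K be a quartic number field with ℚ-basis ν1, ν2, ν3, ν4 ∈ O_K where ν1 = 1 and K = ℚ(ν2). For a prime p and an integer k ≥ 3, the number of triples (x1, x2, x3) ∈ [1, p^k]^3 with p^k dividing N_{K/ℚ}(x1 ν1 + x2 ν2 + x3 ν3) is O(k · p^{11k/4}), where the implied constant depends only on K and the basis. -/
open NumberField Polynomial Finset

/-!
For fixed `x₂, x₃` the map `x₁ ↦ N(x₁ + x₂ ν₂ + x₃ ν₃)` is a monic integer quartic `g`. If five
roots of `g` modulo `p ^ k` were pairwise incongruent modulo `p ^ (m + 1)`, where `4 m < k`,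
Lagrange interpolation would write the leading coefficient `1` as `∑ᵢ g(xᵢ) / ∏_{j ≠ i} (xᵢ - xⱼ)`,
a sum of terms of `p`-adic norm at most `p ^ (4 m - k) < 1`, contradicting the ultrametric
inequality. Hence the roots in `(0, p ^ k]` fall into at most four classes mod `p ^ (m + 1)`, so
there are at most `4 p ^ (k - m - 1)` of them; with `m = ⌊(k - 1) / 4⌋` and `p ^ (2 k)` choices of
`(x₂, x₃)` the count is at most `4 p ^ (11 k / 4)`.
-/

theorem Int.card_Ioc_filter_modEq_add_mul (a v : ℤ) {r : ℤ} (hr : 0 < r) (n : ℕ) :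
    #{x ∈ Ioc a (a + r * n) | x ≡ v [ZMOD r]} = n := by
  have hshift : ((a + r * n : ℤ) - v) / (r : ℚ) = (a - v) / r + n := by
    push_cast; field_simp; ring
  have := Int.Ioc_filter_modEq_card a (a + r * n) hr v
  rw [hshift, Int.floor_add_natCast, add_sub_cancel_left] at this
  exact_mod_cast this.trans (max_eq_left (by positivity))

section PrimePowerRoots

variable {p : ℕ} [Fact p.Prime]

theorem padicNorm_int_ge_of_not_pow_succ_dvd {z : ℤ} {m : ℕ} (h : ¬ (p : ℤ) ^ (m + 1) ∣ z) :
    (p : ℚ) ^ (-(m : ℤ)) ≤ padicNorm p z := by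
  have hz : z ≠ 0 := by rintro rfl; exact h (dvd_zero _)
  have hv : padicValInt p z ≤ m := by
    by_contra! hlt
    exact h ((padicValInt_dvd_iff _ z).mpr (Or.inr hlt))
  rw [padicNorm.eq_zpow_of_nonzero (by exact_mod_cast hz), padicValRat.of_int]
  exact zpow_le_zpow_right₀ (by exact_mod_cast (Fact.out : p.Prime).one_le) (by omega)

theorem padicNorm_prod_int_ge_of_not_pow_succ_dvd {ι : Type*} {s : Finset ι} {f : ι → ℤ} {m : ℕ}
    (h : ∀ i ∈ s, ¬ (p : ℤ) ^ (m + 1) ∣ f i) :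
    (p : ℚ) ^ (-(#s * m : ℕ) : ℤ) ≤ padicNorm p (∏ i ∈ s, (f i : ℚ)) := by
  have hmul := map_prod (IsAbsoluteValue.toAbsoluteValue (padicNorm p)) (fun i => (f i : ℚ)) s
  change padicNorm p _ = ∏ i ∈ s, padicNorm p _ at hmul
  calc (p : ℚ) ^ (-(#s * m : ℕ) : ℤ) = ∏ _i ∈ s, (p : ℚ) ^ (-(m : ℤ)) := by
        rw [prod_const, ← zpow_natCast, ← zpow_mul]; push_cast; ring_nf
    _ ≤ ∏ i ∈ s, padicNorm p (f i) :=
        prod_le_prod (fun _ _ => by positivity)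
          (fun i hi => padicNorm_int_ge_of_not_pow_succ_dvd (h i hi))
    _ = padicNorm p (∏ i ∈ s, (f i : ℚ)) := hmul.symm

theorem padicNorm_int_div_lt_one {z : ℤ} {w : ℚ} {k e : ℕ} (hz : (p : ℤ) ^ k ∣ z)
    (hw : (p : ℚ) ^ (-(e : ℤ)) ≤ padicNorm p w) (hek : e < k) : padicNorm p (z / w) < 1 := by
  have hp : (1 : ℚ) < p := by exact_mod_cast (Fact.out : p.Prime).one_lt
  have hz' : padicNorm p z ≤ (p : ℚ) ^ (-(k : ℤ)) :=
    padicNorm.dvd_iff_norm_le.mp (by exact_mod_cast hz)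
  calc padicNorm p (z / w) = padicNorm p z / padicNorm p w := padicNorm.div _ _
    _ ≤ (p : ℚ) ^ (-(k : ℤ)) / (p : ℚ) ^ (-(e : ℤ)) :=
        div_le_div₀ (by positivity) hz' (by positivity) hw
    _ = (p : ℚ) ^ ((e : ℤ) - k) := by rw [← zpow_sub₀ (by positivity)]; ring_nf
    _ < 1 := zpow_lt_one_of_neg₀ hp (by omega)

theorem card_le_natDegree_of_injOn_emod {g : ℤ[X]} (hg : g.Monic) {k m : ℕ}
    (hkm : g.natDegree * m < k) {s : Finset ℤ}
    (hroot : ∀ x ∈ s, (p : ℤ) ^ k ∣ g.eval x)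
    (hinj : Set.InjOn (· % (p : ℤ) ^ (m + 1)) s) : #s ≤ g.natDegree := by
  by_contra! hs
  obtain ⟨t, hts, ht⟩ := exists_subset_card_eq (hs : g.natDegree + 1 ≤ #s)
  set gQ := g.map (Int.castRingHom ℚ)
  have hgQ : gQ.Monic := hg.map _
  have hlagrange := Lagrange.leadingCoeff_eq_sum (s := t) (v := ((↑) : ℤ → ℚ))
    Int.cast_injective.injOn (P := gQ)
    (by rw [ht, degree_eq_natDegree hgQ.ne_zero, hg.natDegree_map]; norm_cast)
  have hterm : ∀ x ∈ t,
      padicNorm p (gQ.eval (x : ℚ) / ∏ y ∈ t.erase x, ((x : ℚ) - y)) < 1 := by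
    intro x hx
    have hsep : ∀ y ∈ t.erase x, ¬ (p : ℤ) ^ (m + 1) ∣ x - y := fun y hy hdvd =>
      (mem_erase.mp hy).1 (hinj (hts (mem_erase.mp hy).2) (hts hx) (Int.modEq_iff_dvd.mpr hdvd))
    have hden := padicNorm_prod_int_ge_of_not_pow_succ_dvd hsep
    rw [card_erase_of_mem hx, ht, Nat.succ_sub_one] at hden
    push_cast at hden
    rw [eval_intCast_map, eq_intCast]
    exact padicNorm_int_div_lt_one (hroot x (hts hx)) hden hkm
  have := padicNorm.sum_lt' hterm one_pos
  rw [← hlagrange, hgQ.leadingCoeff, padicNorm.one] at this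
  exact lt_irrefl _ this

theorem card_filter_pow_dvd_eval_le {g : ℤ[X]} (hg : g.Monic) {k m : ℕ}
    (hkm : g.natDegree * m < k) (hmk : m < k) (a : ℤ) :
    #{x ∈ Ioc a (a + (p : ℤ) ^ k) | (p : ℤ) ^ k ∣ g.eval x}
      ≤ g.natDegree * p ^ (k - (m + 1)) := by
  set q : ℤ := (p : ℤ) ^ (m + 1)
  set S := {x ∈ Ioc a (a + (p : ℤ) ^ k) | (p : ℤ) ^ k ∣ g.eval x}
  have hq : 0 < q := pow_pos (by exact_mod_cast (Fact.out : p.Prime).pos) _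
  have hsplit : (p : ℤ) ^ k = q * (p ^ (k - (m + 1)) : ℕ) := by
    rw [Nat.cast_pow, ← pow_add]; congr 1; omega
  have hfiber : ∀ b ∈ S.image (· % q), #{x ∈ S | x % q = b} ≤ p ^ (k - (m + 1)) := by
    intro b hb
    obtain ⟨y, -, rfl⟩ := mem_image.mp hb
    calc #{x ∈ S | x % q = y % q} ≤ #{x ∈ Ioc a (a + (p : ℤ) ^ k) | x ≡ y [ZMOD q]} :=
          card_le_card fun x hx => by
            simp only [S, mem_filter] at hx ⊢
            exact ⟨hx.1.1, hx.2⟩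
      _ = p ^ (k - (m + 1)) := by
          rw [hsplit]; exact Int.card_Ioc_filter_modEq_add_mul a y hq _
  have himage : #(S.image (· % q)) ≤ g.natDegree := by
    obtain ⟨u, hus, hinj, hu⟩ := exists_subset_injOn_image_eq_of_surjOn (S : Set ℤ)
      (S.image (· % q)) (by rw [coe_image]; exact Set.surjOn_image _ _)
    rw [← hu, card_image_of_injOn hinj]
    exact card_le_natDegree_of_injOn_emod hg hkm (fun x hx => (mem_filter.mp (hus hx)).2) hinj
  calc #S ≤ p ^ (k - (m + 1)) * #(S.image (· % q)) := card_le_mul_card_image S _ hfiber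
    _ ≤ g.natDegree * p ^ (k - (m + 1)) := by rw [mul_comm]; gcongr

end PrimePowerRoots

theorem card_filter_prod_le_mul {α β : Type*} [DecidableEq β] (s : Finset α) (t : Finset β)
    (P : α × β → Prop) [DecidablePred P] {n : ℕ} (h : ∀ b ∈ t, #{a ∈ s | P (a, b)} ≤ n) :
    #{x ∈ s ×ˢ t | P x} ≤ n * #t := by
  refine card_le_mul_card_image_of_maps_to (f := Prod.snd)
    (fun x hx => (mem_product.mp (mem_filter.mp hx).1).2) n fun b hb => ?_
  refine (card_le_card_of_injOn Prod.fst (fun x hx => ?_) fun x hx y hy hxy => ?_).trans (h b hb)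
  · simp only [coe_filter, Set.mem_ofPred_eq, mem_filter, mem_product] at hx ⊢
    obtain ⟨⟨⟨hxs, -⟩, hP⟩, rfl⟩ := hx
    exact ⟨hxs, hP⟩
  · simp only [coe_filter, Set.mem_ofPred_eq, mem_filter] at hx hy
    exact Prod.ext hxy (hx.2.trans hy.2.symm)

section NormPoly

variable (R : Type*) {S : Type*} [CommRing R] [CommRing S] [Algebra R S]
  [Module.Free R S] [Module.Finite R S]

noncomputable def normPoly (α : S) : R[X] := (Algebra.lmul R S (-α)).charpoly

theorem normPoly_monic (α : S) : (normPoly R α).Monic := LinearMap.charpoly_monic _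

theorem normPoly_natDegree [Nontrivial R] (α : S) :
    (normPoly R α).natDegree = Module.finrank R S := LinearMap.charpoly_natDegree _

theorem normPoly_eval (α : S) (x : R) :
    (normPoly R α).eval x = Algebra.norm R (algebraMap R S x + α) := by
  rw [normPoly, LinearMap.eval_charpoly, Algebra.norm_apply, map_add, map_neg, sub_neg_eq_add,
    AlgHom.commutes]

end NormPoly

theorem card_filter_pow_dvd_norm_add_le {S : Type*} [CommRing S] [Module.Free ℤ S]
    [Module.Finite ℤ S] {p : ℕ} [Fact p.Prime] (α : S) {k m : ℕ}
    (hkm : Module.finrank ℤ S * m < k) (hmk : m < k) (a : ℤ) :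
    #{x ∈ Ioc a (a + (p : ℤ) ^ k) | (p : ℤ) ^ k ∣ Algebra.norm ℤ (x • 1 + α)}
      ≤ Module.finrank ℤ S * p ^ (k - (m + 1)) := by
  simp only [← Algebra.algebraMap_eq_smul_one, ← normPoly_eval, ← normPoly_natDegree ℤ α] at hkm ⊢
  exact card_filter_pow_dvd_eval_le (normPoly_monic ℤ α) hkm hmk a

theorem norm_form_high_prime_power_divisibility_count_general (K : Type*) [Field K] [NumberField K]
    (h4 : Module.finrank ℚ K = 4)
    (ν : Fin 4 → 𝓞 K)
    (hν1 : ν 0 = 1) :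
    ∃ C : ℝ, 0 < C ∧ ∀ (p k : ℕ), p.Prime → 3 ≤ k →
      (Set.ncard {x : ℤ × ℤ × ℤ |
          (1 ≤ x.1 ∧ x.1 ≤ (p : ℤ) ^ k) ∧ (1 ≤ x.2.1 ∧ x.2.1 ≤ (p : ℤ) ^ k) ∧
          (1 ≤ x.2.2 ∧ x.2.2 ≤ (p : ℤ) ^ k) ∧
          (p : ℤ) ^ k ∣ Algebra.norm ℤ (x.1 • ν 0 + x.2.1 • ν 1 + x.2.2 • ν 2)} : ℝ)
        ≤ C * k * (p : ℝ) ^ ((11 * (k : ℝ)) / 4) := by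
  refine ⟨4, by norm_num, fun p k hp hk => ?_⟩
  have := Fact.mk hp
  set m := (k - 1) / 4
  set I := Ioc (0 : ℤ) ((p : ℤ) ^ k)
  have hrank : Module.finrank ℤ (𝓞 K) = 4 := by rw [RingOfIntegers.rank, h4]
  have hfiber : ∀ b ∈ I ×ˢ I, #{x ∈ I | (p : ℤ) ^ k ∣
      Algebra.norm ℤ (x • ν 0 + b.1 • ν 1 + b.2 • ν 2)} ≤ 4 * p ^ (k - (m + 1)) := fun b _ => by
    simpa only [hν1, add_assoc, zero_add, hrank] using
      card_filter_pow_dvd_norm_add_le (p := p) (b.1 • ν 1 + b.2 • ν 2)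
        (by rw [hrank]; omega) (by omega) 0
  have hcount := card_filter_prod_le_mul I (I ×ˢ I) (fun x : ℤ × ℤ × ℤ => (p : ℤ) ^ k ∣
    Algebra.norm ℤ (x.1 • ν 0 + x.2.1 • ν 1 + x.2.2 • ν 2)) hfiber
  rw [card_product, Int.card_Ioc, sub_zero, ← Nat.cast_pow, Int.toNat_natCast] at hcount
  have hexp : ((k - (m + 1) + 2 * k : ℕ) : ℝ) ≤ 11 * (k : ℝ) / 4 := by
    rw [le_div_iff₀ (by norm_num)]; exact_mod_cast (by omega : (k - (m + 1) + 2 * k) * 4 ≤ 11 * k)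
  calc (Set.ncard _ : ℝ) = #{x ∈ I ×ˢ (I ×ˢ I) | (p : ℤ) ^ k ∣
        Algebra.norm ℤ (x.1 • ν 0 + x.2.1 • ν 1 + x.2.2 • ν 2)} := by
        rw [← Set.ncard_coe_finset]; congr 2; ext x
        simp only [I, coe_filter, mem_product, mem_Ioc, Set.mem_ofPred_eq]; omega
    _ ≤ 4 * (p : ℝ) ^ (k - (m + 1) + 2 * k) := by exact_mod_cast hcount.trans_eq (by ring)
    _ ≤ 4 * (p : ℝ) ^ (11 * (k : ℝ) / 4) := by
        rw [← Real.rpow_natCast]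
        gcongr 4 * ?_
        exact Real.rpow_le_rpow_of_exponent_le (by exact_mod_cast hp.one_le) hexp
    _ ≤ 4 * k * (p : ℝ) ^ (11 * (k : ℝ) / 4) := by
        gcongr; exact le_mul_of_one_le_right (by norm_num) (by exact_mod_cast (by omega : 1 ≤ k))

/-- Let `K` be a quartic number field with `ℚ`-basis
`ν1, ν2, ν3, ν4 ∈ 𝓞 K`, `ν1 = 1` and `K = ℚ(ν2)`. Then for every prime `p` and every
`k ≥ 3`, the number of triples `(x1,x2,x3) ∈ [1,p^k]^3` with
`p^k ∣ N_{K/ℚ}(x1 ν1 + x2 ν2 + x3 ν3)` is `O(k ⬝ p^{11k/4})`, with implied constant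
depending only on `K` and the basis. -/
theorem norm_form_high_prime_power_divisibility_count (K : Type*) [Field K] [NumberField K]
    (h4 : Module.finrank ℚ K = 4)
    (ν : Fin 4 → 𝓞 K) (bν : Module.Basis (Fin 4) ℚ K) (hbν : ∀ i, bν i = (ν i : K))
    (hν1 : ν 0 = 1)
    (hgen : IntermediateField.adjoin ℚ {(ν 1 : K)} = ⊤) :
    ∃ C : ℝ, 0 < C ∧ ∀ (p k : ℕ), p.Prime → 3 ≤ k →
      (Set.ncard {x : ℤ × ℤ × ℤ |
          (1 ≤ x.1 ∧ x.1 ≤ (p : ℤ) ^ k) ∧ (1 ≤ x.2.1 ∧ x.2.1 ≤ (p : ℤ) ^ k) ∧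
          (1 ≤ x.2.2 ∧ x.2.2 ≤ (p : ℤ) ^ k) ∧
          (p : ℤ) ^ k ∣ Algebra.norm ℤ (x.1 • ν 0 + x.2.1 • ν 1 + x.2.2 • ν 2)} : ℝ)
        ≤ C * k * (p : ℝ) ^ ((11 * (k : ℝ)) / 4) :=
  norm_form_high_prime_power_divisibility_count_general K h4 ν hν1
end

section
/- Let f1, f2 ∈ ℤ[a0] be quadratic polynomials (coefficients depending on parameters), let n be an integer with Res(f1, f2) = n·s for integers n, s, and suppose p is a prime with p | n, p ∤ s, and n squarefree in the sense that p^2 ∤ n·s. If f1 and f2 have a common root in an extension of 𝔽_p and the reduction of f2 mod p has degree 2, then f1 and f2 have a common root in 𝔽_p itself. -/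
/-!
A common root `x` of `f1, f2 mod p` either lies in `𝔽_p`, or its minimal polynomial over `𝔽_p`
is a quadratic dividing both reductions, which are then proportional: `f1 ≡ c f2 (mod p)`.
The resultant is invariant under `f1 ↦ f1 - c f2` and homogeneous of degree 2 in `f1`, so
writing `f1 - c f2 = p h` gives `n s = Res(f1, f2) = p² Res(h, f2)`, contradicting `p² ∤ n s`.
-/

open Polynomial

/-- The resultant of two quadratic polynomials, as the determinant of the 4×4 Sylvester
matrix. -/
noncomputable def res22 (f g : Polynomial ℤ) : ℤ :=
  Matrix.det !![f.coeff 2, f.coeff 1, f.coeff 0, 0;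
                0, f.coeff 2, f.coeff 1, f.coeff 0;
                g.coeff 2, g.coeff 1, g.coeff 0, 0;
                0, g.coeff 2, g.coeff 1, g.coeff 0]

theorem res22_eq (f g : ℤ[X]) :
    res22 f g = f.coeff 2 ^ 2 * g.coeff 0 ^ 2 - f.coeff 2 * f.coeff 1 * g.coeff 1 * g.coeff 0
      - 2 * f.coeff 2 * f.coeff 0 * g.coeff 2 * g.coeff 0 + f.coeff 2 * f.coeff 0 * g.coeff 1 ^ 2
      + f.coeff 1 ^ 2 * g.coeff 2 * g.coeff 0 - f.coeff 1 * f.coeff 0 * g.coeff 2 * g.coeff 1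
      + f.coeff 0 ^ 2 * g.coeff 2 ^ 2 := by
  simp [res22, Matrix.det_succ_row_zero, Fin.sum_univ_succ, Fin.succAbove]
  ring

theorem res22_sub_C_mul_right (f g : ℤ[X]) (c : ℤ) : res22 (f - C c * g) g = res22 f g := by
  simp only [res22_eq, coeff_sub, coeff_C_mul]
  ring

theorem res22_C_mul_left (q : ℤ) (f g : ℤ[X]) : res22 (C q * f) g = q ^ 2 * res22 f g := by
  simp only [res22_eq, coeff_C_mul]
  ring

theorem exists_common_root_or_eq_C_mul {K L : Type*} [Field K] [Ring L] [Nontrivial L]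
    [Algebra K L] {F G : K[X]} (hF : F.natDegree ≤ 2) (hG : G.natDegree = 2) {x : L}
    (hx : IsIntegral K x) (hFx : aeval x F = 0) (hGx : aeval x G = 0) :
    (∃ y : K, F.eval y = 0 ∧ G.eval y = 0) ∨ ∃ e : K, F = C e * G := by
  have hG0 : G ≠ 0 := by rintro rfl; simp at hG
  have hmF : minpoly K x ∣ F := minpoly.dvd K x hFx
  have hmG : minpoly K x ∣ G := minpoly.dvd K x hGx
  by_cases hxK : x ∈ (algebraMap K L).range
  · obtain ⟨y, rfl⟩ := hxK
    rw [aeval_algebraMap_apply_eq_algebraMap_eval] at hFx hGx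
    have hinj := FaithfulSMul.algebraMap_injective K L
    exact .inl ⟨y, (map_eq_zero_iff _ hinj).1 hFx, (map_eq_zero_iff _ hinj).1 hGx⟩
  · right
    have hm2 : (minpoly K x).natDegree = 2 := by
      have := natDegree_le_of_dvd hmG hG0
      have := (minpoly.two_le_natDegree_iff hx).2 hxK
      omega
    have hmon := minpoly.monic hx
    have hFm := eq_leadingCoeff_mul_of_monic_of_dvd_of_natDegree_le hmon hmF (by omega)
    have hGm := eq_leadingCoeff_mul_of_monic_of_dvd_of_natDegree_le hmon hmG (by omega)
    refine ⟨F.leadingCoeff / G.leadingCoeff, ?_⟩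
    calc F = C F.leadingCoeff * minpoly K x := hFm
      _ = C (F.leadingCoeff / G.leadingCoeff) * (C G.leadingCoeff * minpoly K x) := by
        rw [← mul_assoc, ← C_mul, div_mul_cancel₀ _ (leadingCoeff_ne_zero.2 hG0)]
      _ = C (F.leadingCoeff / G.leadingCoeff) * G := by rw [← hGm]

theorem C_dvd_of_map_eq_zero {p : ℕ} {f : ℤ[X]} (hf : f.map (Int.castRingHom (ZMod p)) = 0) :
    C (p : ℤ) ∣ f := by
  refine (C_dvd_iff_dvd_coeff _ _).2 fun i => ?_
  rw [← ZMod.intCast_zmod_eq_zero_iff_dvd, ← eq_intCast (Int.castRingHom (ZMod p)), ← coeff_map,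
    hf, coeff_zero]

theorem common_root_descends_to_Fp_general (f1 f2 : Polynomial ℤ)
    (h1 : f1.natDegree = 2)
    (n s : ℤ) (hres : res22 f1 f2 = n * s)
    (p : ℕ) [hp : Fact p.Prime]
    (hsq : ¬ ((p : ℤ) ^ 2 ∣ n * s))
    (hdeg2 : (f2.map (Int.castRingHom (ZMod p))).natDegree = 2)
    (hcommon : ∃ x : AlgebraicClosure (ZMod p),
        Polynomial.eval x ((f1.map (Int.castRingHom (ZMod p))).map
          (algebraMap (ZMod p) (AlgebraicClosure (ZMod p)))) = 0 ∧
        Polynomial.eval x ((f2.map (Int.castRingHom (ZMod p))).map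
          (algebraMap (ZMod p) (AlgebraicClosure (ZMod p)))) = 0) :
    ∃ x : ZMod p,
      Polynomial.eval x (f1.map (Int.castRingHom (ZMod p))) = 0 ∧
      Polynomial.eval x (f2.map (Int.castRingHom (ZMod p))) = 0 := by
  obtain ⟨x, hx1, hx2⟩ := hcommon
  rw [eval_map_algebraMap] at hx1 hx2
  have hdeg1 : (f1.map (Int.castRingHom (ZMod p))).natDegree ≤ 2 := h1 ▸ natDegree_map_le
  obtain hroot | ⟨e, he⟩ := exists_common_root_or_eq_C_mul hdeg1 hdeg2
    (Algebra.IsIntegral.isIntegral x) hx1 hx2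
  · exact hroot
  obtain ⟨c, rfl⟩ := ZMod.intCast_surjective e
  have hred : (f1 - C c * f2).map (Int.castRingHom (ZMod p)) = 0 := by
    rw [Polynomial.map_sub, Polynomial.map_mul, map_C, he, eq_intCast, sub_self]
  obtain ⟨h, hh⟩ := C_dvd_of_map_eq_zero hred
  refine absurd ?_ hsq
  rw [← hres, ← res22_sub_C_mul_right f1 f2 c, hh, res22_C_mul_left]
  exact dvd_mul_right _ _

/-- Let `f1, f2 ∈ ℤ[a0]` be quadratics with `Res(f1, f2) = n ⬝ s`, and
`p` a prime with `p ∣ n`, `p ∤ s` and `p² ∤ n s`.  If `f1` and `f2` have a common root in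
an extension of `𝔽_p` (equivalently, in its algebraic closure) and `f2 mod p` has
degree 2, then `f1` and `f2` have a common root in `𝔽_p` itself. -/
theorem common_root_descends_to_Fp (f1 f2 : Polynomial ℤ)
    (h1 : f1.natDegree = 2) (h2 : f2.natDegree = 2)
    (n s : ℤ) (hres : res22 f1 f2 = n * s)
    (p : ℕ) [hp : Fact p.Prime] (hpn : (p : ℤ) ∣ n) (hps : ¬ (p : ℤ) ∣ s)
    (hsq : ¬ ((p : ℤ) ^ 2 ∣ n * s))
    (hdeg2 : (f2.map (Int.castRingHom (ZMod p))).natDegree = 2)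
    (hcommon : ∃ x : AlgebraicClosure (ZMod p),
        Polynomial.eval x ((f1.map (Int.castRingHom (ZMod p))).map
          (algebraMap (ZMod p) (AlgebraicClosure (ZMod p)))) = 0 ∧
        Polynomial.eval x ((f2.map (Int.castRingHom (ZMod p))).map
          (algebraMap (ZMod p) (AlgebraicClosure (ZMod p)))) = 0) :
    ∃ x : ZMod p,
      Polynomial.eval x (f1.map (Int.castRingHom (ZMod p))) = 0 ∧
      Polynomial.eval x (f2.map (Int.castRingHom (ZMod p))) = 0 :=
  common_root_descends_to_Fp_general f1 f2 h1 n s hres p (hp := hp) hsq hdeg2 hcommon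
end
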